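/- arXiv:2502.09830 — 6 statements merged into one kernel-verified Lean document; each statement's English description precedes it below -/
import Mathlib

section
/- Let F be a balanced complete multipartite graph with at least two edges and let m ≥ 1. If a graph H has no subgraph isomorphic to (m, F), then H ↛nni (F)_{4m·v(F)}, i.e., there is a colouring of the edges of H with 4m·v(F) colours such that no subgraph of H isomorphic to F is monochromatic. -/
open SimpleGraph

/-- `G →nni (F)_r` : every `r`-colouring of the edges of `G` yields a monochromatic
(not necessarily induced) subgraph of `G` isomorphic to `F`. -/
def ArrowNNI {V α : Type*} (G : SimpleGraph V) (F : SimpleGraph α) (r : ℕ) : Prop :=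
  ∀ c : Sym2 V → Fin r, ∃ f : F →g G, Function.Injective f ∧
    ∃ k : Fin r, ∀ x y, F.Adj x y → c s(f x, f y) = k

/-- `H` contains a copy of the graph `(m, F)` obtained by gluing `m` copies of `F` along
a single common edge: there are `m` injective homomorphic images of `F` in `H` and an
edge `xy` of `H` which is an edge of each copy, such that any two of the copies share
exactly the vertices `x` and `y`. -/
def HasGluedCopies {α V : Type*} (F : SimpleGraph α) (H : SimpleGraph V) (m : ℕ) : Prop :=
  ∃ (f : Fin m → F →g H) (x y : V), H.Adj x y ∧
    (∀ i, Function.Injective (f i)) ∧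
    (∀ i, ∃ a b, F.Adj a b ∧ f i a = x ∧ f i b = y) ∧
    (∀ i j, i ≠ j → Set.range (f i) ∩ Set.range (f j) = {x, y})

/-!
Order the pairs of vertices of `H` by a well-order. For every pair `e`, a maximal family of copies
of `F` through `e` pairwise meeting only in `e` has fewer than `m` members, since `H` contains no
`(m, F)`; by maximality, every copy through `e` meets the vertex set `U e` of this family outside
`e`. Colour the pairs greedily along the well-order so that `e` avoids the colours of the earlier
pairs joining an endpoint of `e` to `U e`; there are at most `2 (m - 1) v(F)` of them. In a
monochromatic copy with last edge `e = ab`, pick a vertex `u ∈ U e` outside `e`. As `F` is complete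
multipartite, `u` is adjacent to `a` or `b`, which gives an earlier edge of the copy meeting `e`
and having the same colour as `e`.
-/

open Finset

theorem Finset.exists_maximal_of_card_lt {β : Type*} [DecidableEq β] {P : Finset β → Prop}
    {m : ℕ} (h0 : P ∅) (hlt : ∀ M, P M → #M < m) :
    ∃ M, P M ∧ ∀ x ∉ M, ¬P (insert x M) := by
  by_contra! hgrow
  have hcard : ∀ n, ∃ M, P M ∧ #M = n := by
    intro n
    induction n with
    | zero => exact ⟨∅, h0, card_empty⟩
    | succ n ih =>
      obtain ⟨M, hM, rfl⟩ := ih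
      obtain ⟨x, hx, hxM⟩ := hgrow M hM
      exact ⟨insert x M, hxM, card_insert_of_notMem hx⟩
  obtain ⟨M, hM, hMm⟩ := hcard m
  exact (hlt M hM).ne hMm

theorem exists_coloring_of_wellFounded {β : Type*} {r : β → β → Prop} (hr : WellFounded r)
    {R : ℕ} (N : β → Finset β) (hN : ∀ b, ∀ b' ∈ N b, r b' b) (hcard : ∀ b, #(N b) < R) :
    ∃ c : β → Fin R, ∀ b, ∀ b' ∈ N b, c b' ≠ c b := by
  classical
  have hmissing : ∀ b (col : N b → Fin R), ∃ k, ∀ x, col x ≠ k := by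
    intro b col
    obtain ⟨k, -, hk⟩ := exists_mem_notMem_of_card_lt_card (s := univ.image col) (t := univ)
      (card_image_le.trans_lt (by simpa using hcard b))
    exact ⟨k, fun x hx => hk (mem_image.2 ⟨x, mem_univ _, hx⟩)⟩
  let c : β → Fin R := hr.fix fun b ih => (hmissing b fun x => ih x (hN b x x.2)).choose
  have hc : ∀ b, c b = (hmissing b fun x => c x).choose := hr.fix_eq _
  refine ⟨c, fun b b' hb' => ?_⟩
  rw [hc b]
  exact (hmissing b fun x => c x).choose_spec ⟨b', hb'⟩

namespace SimpleGraph

theorem two_lt_card_of_two_le_ncard_edgeSet {α : Type*} [Fintype α] {F : SimpleGraph α}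
    (hE : 2 ≤ F.edgeSet.ncard) : 2 < Fintype.card α := by
  classical
  have hchoose := F.card_edgeFinset_le_card_choose_two
  rw [← Set.ncard_coe_finset, coe_edgeFinset] at hchoose
  by_contra! h
  have : (Fintype.card α).choose 2 ≤ 1 := by interval_cases Fintype.card α <;> decide
  omega

theorem IsCompleteMultipartite.adj_or_adj {α : Type*} {F : SimpleGraph α}
    (hF : F.IsCompleteMultipartite) {a b : α} (hab : F.Adj a b) (u : α) :
    F.Adj u a ∨ F.Adj u b := by
  by_contra! h
  exact hF.trans a u b (fun hau => h.1 hau.symm) h.2 hab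

variable {α V : Type*} {F : SimpleGraph α} {H : SimpleGraph V}

theorem Copy.mk_mem_toSubgraph_edgeSet {c : Copy F H} {x y : V} :
    s(x, y) ∈ c.toSubgraph.edgeSet ↔ ∃ a b, F.Adj a b ∧ c a = x ∧ c b = y := by
  simp only [Subgraph.mem_edgeSet, Subgraph.map_adj]
  rfl

theorem Copy.mem_range_of_mem_edge {c : Copy F H} {e : Sym2 V} {v : V}
    (he : e ∈ c.toSubgraph.edgeSet) (hv : v ∈ e) : v ∈ Set.range c := by
  simpa using c.toSubgraph.mem_verts_of_mem_edge he hv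

theorem Copy.exists_apply_notMem [Fintype α] (hα : 2 < Fintype.card α) (c : Copy F H)
    (e : Sym2 V) : ∃ a, c a ∉ e := by
  classical
  obtain ⟨v, hv, hve⟩ := exists_mem_notMem_of_card_lt_card (s := e.toFinset) (t := univ.image c)
    (by
      rw [card_image_of_injective (f := ⇑c) _ c.injective, card_univ, Sym2.card_toFinset]
      split_ifs <;> omega)
  obtain ⟨a, -, rfl⟩ := mem_image.1 hv
  exact ⟨a, fun h => hve (Sym2.mem_toFinset.2 h)⟩

variable (F H) in
/-- The copies in `M` form a copy of the glued graph `(#M, F)` with kernel `e`. -/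
def IsGluedFamily (e : Sym2 V) (M : Finset (Copy F H)) : Prop :=
  (∀ c ∈ M, e ∈ c.toSubgraph.edgeSet) ∧
    (M : Set (Copy F H)).Pairwise fun c d => Set.range c ∩ Set.range d = {v | v ∈ e}

theorem hasGluedCopies_of_isGluedFamily {m : ℕ} {e : Sym2 V} {M : Finset (Copy F H)}
    (hM : IsGluedFamily F H e M) (hm : 1 ≤ m) (hcard : m ≤ #M) : HasGluedCopies F H m := by
  induction e using Sym2.ind with | _ x y => ?_
  let ι : Fin m ↪ M := (Fin.castLEEmb hcard).trans M.equivFin.symm.toEmbedding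
  have hedge : ∀ i, ∃ a b, F.Adj a b ∧ (ι i : Copy F H) a = x ∧ (ι i : Copy F H) b = y :=
    fun i => Copy.mk_mem_toSubgraph_edgeSet.1 (hM.1 _ (ι i).2)
  refine ⟨fun i => (ι i : Copy F H).toHom, x, y, ?_, fun i => (ι i : Copy F H).injective,
    hedge, fun i j hij => ?_⟩
  · exact (ι ⟨0, hm⟩ : Copy F H).toSubgraph.edgeSet_subset (hM.1 _ (ι _).2)
  · have hne : (ι i : Copy F H) ≠ ι j := fun h => hij (ι.injective (Subtype.ext h))
    rw [show ({x, y} : Set V) = {v | v ∈ s(x, y)} by ext; simp]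
    exact hM.2 (ι i).2 (ι j).2 hne

theorem exists_blocking_family [Fintype α] {m : ℕ} (hfree : ¬HasGluedCopies F H m) (hm : 1 ≤ m)
    (hα : 2 < Fintype.card α) (e : Sym2 V) :
    ∃ M : Finset (Copy F H), #M < m ∧ ∀ c : Copy F H, e ∈ c.toSubgraph.edgeSet →
      ∃ d ∈ M, ∃ a, c a ∈ Set.range d ∧ c a ∉ e := by
  classical
  have hlt : ∀ M, IsGluedFamily F H e M → #M < m := fun M hM =>
    lt_of_not_ge fun h => hfree (hasGluedCopies_of_isGluedFamily hM hm h)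
  obtain ⟨M, hM, hmax⟩ :=
    Finset.exists_maximal_of_card_lt (P := IsGluedFamily F H e) ⟨by simp, by simp⟩ hlt
  refine ⟨M, hlt M hM, fun c hc => ?_⟩
  by_cases hcM : c ∈ M
  · obtain ⟨a, ha⟩ := c.exists_apply_notMem hα e
    exact ⟨c, hcM, a, ⟨a, rfl⟩, ha⟩
  by_contra! hmeet
  have hinter : ∀ d ∈ M, Set.range c ∩ Set.range d = {v | v ∈ e} := by
    intro d hd
    ext v
    refine ⟨?_, fun hv =>
      ⟨Copy.mem_range_of_mem_edge hc hv, Copy.mem_range_of_mem_edge (hM.1 d hd) hv⟩⟩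
    rintro ⟨⟨a, rfl⟩, hd'⟩
    exact hmeet d hd a hd'
  refine hmax c hcM ⟨?_, ?_⟩
  · exact (forall_mem_insert _ _ _).2 ⟨hc, hM.1⟩
  · rw [coe_insert, Set.pairwise_insert]
    refine ⟨hM.2, fun d hd _ => ⟨hinter d hd, ?_⟩⟩
    rw [Set.inter_comm]
    exact hinter d hd

theorem exists_coloring_avoiding_earlier_neighbours {r : Sym2 V → Sym2 V → Prop}
    (hr : WellFounded r) {R : ℕ} (U : Sym2 V → Finset V) (hU : ∀ e, 2 * #(U e) < R) :
    ∃ C : Sym2 V → Fin R, ∀ e v w, v ∈ e → w ∈ U e → r s(v, w) e → C s(v, w) ≠ C e := by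
  classical
  let N e := ((e.toFinset ×ˢ U e).image fun p => s(p.1, p.2)).filter (r · e)
  have hN : ∀ e, #(N e) < R := fun e => calc
    #(N e) ≤ #(e.toFinset ×ˢ U e) := (card_filter_le _ _).trans card_image_le
    _ = #e.toFinset * #(U e) := card_product _ _
    _ ≤ 2 * #(U e) := by
      gcongr
      rw [Sym2.card_toFinset]
      split_ifs <;> omega
    _ < R := hU e
  obtain ⟨C, hC⟩ := exists_coloring_of_wellFounded hr N (fun e e' he' => (mem_filter.1 he').2) hN
  exact ⟨C, fun e v w hv hw hvw => hC e _ (mem_filter.2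
    ⟨mem_image.2 ⟨(v, w), mem_product.2 ⟨Sym2.mem_toFinset.2 hv, hw⟩, rfl⟩, hvw⟩)⟩

theorem Copy.exists_max_edge [Finite α] {ι : Type*} [LinearOrder ι] (ρ : Sym2 V → ι)
    (hF : F.edgeSet.Nonempty) (c : Copy F H) :
    ∃ e ∈ c.toSubgraph.edgeSet, ∀ e' ∈ c.toSubgraph.edgeSet, ρ e' ≤ ρ e := by
  apply Set.exists_max_image _ ρ
  · rw [Subgraph.edgeSet_map, Subgraph.edgeSet_top]
    exact F.edgeSet.toFinite.image _
  · rw [Subgraph.edgeSet_map, Subgraph.edgeSet_top]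
    exact hF.image _

theorem IsCompleteMultipartite.not_arrowNNI [Fintype α] (hF : F.IsCompleteMultipartite)
    (hE : 2 ≤ F.edgeSet.ncard) {m R : ℕ} (hm : 1 ≤ m) (hR : 2 * ((m - 1) * Fintype.card α) < R)
    (hfree : ¬HasGluedCopies F H m) : ¬ArrowNNI H F R := by
  classical
  intro harrow
  choose M hMcard hM using exists_blocking_family hfree hm (two_lt_card_of_two_le_ncard_edgeSet hE)
  let U e := (M e).biUnion fun d => univ.image d
  have hU : ∀ e, 2 * #(U e) < R := fun e => by
    have hUe : #(U e) ≤ #(M e) * Fintype.card α :=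
      card_biUnion_le_card_mul _ _ _ fun d _ => card_image_le
    refine lt_of_le_of_lt ?_ hR
    gcongr
    exact hUe.trans (Nat.mul_le_mul_right _ (Nat.le_sub_one_of_lt (hMcard e)))
  let ρ : Sym2 V ↪ Cardinal := embeddingToCardinal
  obtain ⟨C, hC⟩ := exists_coloring_avoiding_earlier_neighbours
    (InvImage.wf ρ Cardinal.lt_wf) U hU
  obtain ⟨g, hg, κ, hκ⟩ := harrow C
  let c : Copy F H := g.toCopy hg
  obtain ⟨e, he, hemax⟩ := c.exists_max_edge ρ (Set.nonempty_of_ncard_ne_zero (by omega))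
  obtain ⟨d, hd, u, hud, hue⟩ := hM e c he
  induction e using Sym2.ind with | _ x y => ?_
  obtain ⟨a, b, hab, rfl, rfl⟩ := Copy.mk_mem_toSubgraph_edgeSet.1 he
  -- `s(c z, c u)` is an earlier edge of `c` joining an endpoint of its last edge to `U`,
  -- so the greedy colouring gave it a different colour
  obtain ⟨z, huz, hz⟩ : ∃ z, F.Adj u z ∧ c z ∈ s(c a, c b) :=
    (hF.adj_or_adj hab u).elim (fun h => ⟨a, h, Sym2.mem_mk_left _ _⟩)
      (fun h => ⟨b, h, Sym2.mem_mk_right _ _⟩)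
  have hlt : ρ s(c z, c u) < ρ s(c a, c b) := by
    refine (hemax _ (Copy.mk_mem_toSubgraph_edgeSet.2 ⟨z, u, huz.symm, rfl, rfl⟩)).lt_of_ne ?_
    exact ρ.injective.ne fun h => hue (h ▸ Sym2.mem_mk_right _ _)
  have hu : c u ∈ U s(c a, c b) := mem_biUnion.2 ⟨d, hd, by simpa using hud⟩
  exact hC _ _ _ hz hu hlt ((hκ z u huz.symm).trans (hκ a b hab).symm)

end SimpleGraph

/-- Let `F` be a balanced complete multipartite graph (with `t` parts of size `s`) having
at least two edges, and let `m ≥ 1`.  If a graph `H` has no subgraph isomorphic to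
`(m, F)`, then `H ↛nni (F)_{4·m·v(F)}` where `v(F) = t·s`. -/
theorem glued_free_graphs_are_not_ramsey (t s m : ℕ) (hm : 1 ≤ m)
    (hE : 2 ≤ (completeMultipartiteGraph fun _ : Fin t => Fin s).edgeSet.ncard)
    {V : Type} (H : SimpleGraph V)
    (hfree : ¬ HasGluedCopies (completeMultipartiteGraph fun _ : Fin t => Fin s) H m) :
    ¬ ArrowNNI H (completeMultipartiteGraph fun _ : Fin t => Fin s) (4 * m * (t * s)) := by
  refine (completeMultipartiteGraph.isCompleteMultipartite _).not_arrowNNI hE hm ?_ hfree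
  have hk := two_lt_card_of_two_le_ncard_edgeSet hE
  simp only [Fintype.card_sigma, Fintype.card_fin, sum_const, card_univ, smul_eq_mul] at hk ⊢
  have hpos : 0 < m * (t * s) := Nat.mul_pos hm (by omega)
  calc 2 * ((m - 1) * (t * s)) ≤ 2 * (m * (t * s)) := by gcongr; omega
    _ < 4 * m * (t * s) := by rw [mul_assoc 4]; omega
end

section
/- Let 𝒻 be a forest of copies of finite linear k-uniform hypergraphs and let J be an induced subhypergraph of ⋃𝒻. If J is (e,v)-inseparable, then there is some F ∈ 𝒻 such that J is an induced subhypergraph of F. -/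
/-- A finite `k`-uniform hypergraph with vertices in `ℕ`. -/
structure UnifHypergraph (k : ℕ) where
  verts : Finset ℕ
  edges : Finset (Finset ℕ)
  card_edges : ∀ e ∈ edges, e.card = k
  edges_subset : ∀ e ∈ edges, e ⊆ verts

namespace UnifHypergraph

variable {k : ℕ}

/-- A hypergraph is linear if any two distinct edges share at most one vertex. -/
def Linear (H : UnifHypergraph k) : Prop :=
  ∀ e ∈ H.edges, ∀ f ∈ H.edges, e ≠ f → (e ∩ f).card ≤ 1

/-- A hypergraph is connected if for every partition of its vertex set into two
nonempty parts some edge meets both parts. -/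
def Connected (H : UnifHypergraph k) : Prop :=
  ∀ X Y : Finset ℕ, X ∪ Y = H.verts → Disjoint X Y → X.Nonempty → Y.Nonempty →
    ∃ e ∈ H.edges, (e ∩ X).Nonempty ∧ (e ∩ Y).Nonempty

/-- Deleting a set `z` of vertices (and all edges meeting `z`). -/
def delete (H : UnifHypergraph k) (z : Finset ℕ) : UnifHypergraph k where
  verts := H.verts \ z
  edges := H.edges.filter fun e => Disjoint e z
  card_edges := fun e he => H.card_edges e (Finset.mem_filter.mp he).1
  edges_subset := fun e he x hx =>
    Finset.mem_sdiff.mpr ⟨H.edges_subset e (Finset.mem_filter.mp he).1 hx,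
      fun hxz => Finset.disjoint_left.mp (Finset.mem_filter.mp he).2 hx hxz⟩

/-- A linear `k`-uniform hypergraph is `(e,v)`-inseparable if it is connected with at
least two edges, remains connected after deleting any set of fewer than `k` vertices no
two of which lie in a common edge, and remains connected after deleting the vertex set
of any edge. -/
def Inseparable (H : UnifHypergraph k) : Prop :=
  (H.Connected ∧ 2 ≤ H.edges.card) ∧
  (∀ z : Finset ℕ, z ⊆ H.verts → z.card < k →
    (∀ x ∈ z, ∀ y ∈ z, x ≠ y → ∀ e ∈ H.edges, ¬(x ∈ e ∧ y ∈ e)) →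
    (H.delete z).Connected) ∧
  (∀ e ∈ H.edges, (H.delete e).Connected)

/-- `J` is an induced subhypergraph of `H`: its vertex set is contained in that of `H`
and its edges are exactly the edges of `H` lying inside `V(J)`. -/
def IsInducedSub (J H : UnifHypergraph k) : Prop :=
  J.verts ⊆ H.verts ∧ ∀ e, e ∈ J.edges ↔ e ∈ H.edges ∧ e ⊆ J.verts

/-- The union of a finite family of hypergraphs. -/
def unionOf (𝒻 : Finset (UnifHypergraph k)) : UnifHypergraph k where
  verts := 𝒻.sup UnifHypergraph.verts
  edges := 𝒻.sup UnifHypergraph.edges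
  card_edges := fun e he => by
    rw [Finset.mem_sup] at he
    obtain ⟨F, _, he⟩ := he
    exact F.card_edges e he
  edges_subset := fun e he => by
    rw [Finset.mem_sup] at he
    obtain ⟨F, hF, he⟩ := he
    exact (F.edges_subset e he).trans (Finset.le_sup hF)

/-- The condition that an enumeration `F 0, F 1, …` of `k`-uniform hypergraphs forms a
forest of copies: for every `j ≥ 1` the intersection of `V(F j)` with the union of the
vertex sets of the earlier members is empty, a single vertex, or an edge belonging both
to `F j` and to some earlier member. -/
def ForestCond {m : ℕ} (F : Fin m → UnifHypergraph k) : Prop :=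
  ∀ j : Fin m, (j : ℕ) ≠ 0 →
    ((F j).verts ∩ (Finset.univ.filter fun i => i < j).sup fun i => (F i).verts) = ∅ ∨
    (∃ v, ((F j).verts ∩
      (Finset.univ.filter fun i => i < j).sup fun i => (F i).verts) = {v}) ∨
    (((F j).verts ∩
        (Finset.univ.filter fun i => i < j).sup fun i => (F i).verts) ∈ (F j).edges ∧
      ∃ i, i < j ∧ ((F j).verts ∩
        (Finset.univ.filter fun i => i < j).sup fun i => (F i).verts) ∈ (F i).edges)

/-- A set of `k`-uniform hypergraphs is a forest of copies if it admits an enumeration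
satisfying `ForestCond`. -/
def IsForestOfCopies (𝒻 : Set (UnifHypergraph k)) : Prop :=
  ∃ (m : ℕ) (F : Fin m → UnifHypergraph k), Function.Injective F ∧
    (∀ H, H ∈ 𝒻 ↔ ∃ i, F i = H) ∧ ForestCond F

end UnifHypergraph


/-!
Induct along the enumeration `F 0, F 1, …`. Suppose `V(J)` lies in the vertices of the first
`n + 1` members but neither in those of the first `n` nor in `V(F n)`. Every edge of `J` lies
on one side, because an edge lying among the earlier vertices is the separator
`S = V(F n) ∩ (V(F 0) ∪ … ∪ V(F (n - 1)))` and hence already an edge of an earlier member.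
So deleting `V(J) ∩ S` disconnects `J`. But `S` is empty, a vertex, or an edge, and the union
of the forest is linear; hence `V(J) ∩ S` is either an edge of `J` or an independent set of
fewer than `k` vertices, and inseparability keeps `J` connected after deleting it.
-/

namespace UnifHypergraph

open Finset

variable {k m : ℕ}

theorem Connected.card_verts_le_one {J : UnifHypergraph k} (hJ : J.Connected) (hk : k ≤ 1) :
    J.verts.card ≤ 1 := by
  by_contra! h
  obtain ⟨x, hx⟩ := card_pos.mp (by omega : 0 < J.verts.card)
  have hrest : (J.verts \ {x}).Nonempty := sdiff_nonempty.mpr fun hsub => by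
    have := card_le_card hsub
    rw [card_singleton] at this
    omega
  obtain ⟨e, he, ⟨y, hy⟩, ⟨z, hz⟩⟩ := hJ {x} (J.verts \ {x})
    (union_sdiff_of_subset (singleton_subset_iff.mpr hx)) disjoint_sdiff
    (singleton_nonempty x) hrest
  simp only [mem_inter, mem_sdiff, mem_singleton] at hy hz
  have := one_lt_card.mpr ⟨y, hy.1, z, hz.1, fun hyz => hz.2.2 (hyz ▸ hy.2)⟩
  have := J.card_edges e he
  omega

theorem two_le_of_inseparable {J : UnifHypergraph k} (hJ : J.Inseparable) : 2 ≤ k := by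
  by_contra! hk
  obtain ⟨a, ha, b, hb, hab⟩ := one_lt_card.mp hJ.1.2
  have hunion : (a ∪ b).card ≤ 1 :=
    (card_le_card (union_subset (J.edges_subset a ha) (J.edges_subset b hb))).trans
      (hJ.1.1.card_verts_le_one (by omega))
  have hcard := card_union_add_card_inter a b
  have ha' := J.card_edges a ha
  have hb' := J.card_edges b hb
  have hinter : a ∩ b = a := eq_of_subset_of_card_le inter_subset_left (by omega)
  exact hab (eq_of_subset_of_card_le (hinter ▸ inter_subset_right) (by omega))

theorem Inseparable.connected_delete_of_card_lt {J : UnifHypergraph k} (hJ : J.Inseparable)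
    {z : Finset ℕ} (hz : z ⊆ J.verts) (hcard : z.card < k)
    (hindep : ∀ e ∈ J.edges, (e ∩ z).card ≤ 1) : (J.delete z).Connected :=
  hJ.2.1 z hz hcard fun x hx y hy hxy e he hxye =>
    hxy <| card_le_one.mp (hindep e he) x (mem_inter.mpr ⟨hxye.1, hx⟩) y
      (mem_inter.mpr ⟨hxye.2, hy⟩)

theorem not_connected_delete_inter {J : UnifHypergraph k} {P Q : Finset ℕ}
    (hPQ : J.verts ⊆ P ∪ Q) (hP : ¬J.verts ⊆ P) (hQ : ¬J.verts ⊆ Q)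
    (hedges : ∀ e ∈ J.edges, e ⊆ P ∨ e ⊆ Q) :
    ¬(J.delete (J.verts ∩ (P ∩ Q))).Connected := by
  intro hconn
  have hunion : J.verts \ P ∪ J.verts \ Q = (J.delete (J.verts ∩ (P ∩ Q))).verts := by
    simp only [delete, sdiff_inter_self_left, sdiff_inter_distrib_right]
  have hdisj : Disjoint (J.verts \ P) (J.verts \ Q) := by
    rw [disjoint_left]
    intro x hxP hxQ
    rcases mem_union.mp (hPQ (mem_sdiff.mp hxP).1) with h | h
    exacts [(mem_sdiff.mp hxP).2 h, (mem_sdiff.mp hxQ).2 h]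
  obtain ⟨e, he, ⟨x, hx⟩, ⟨y, hy⟩⟩ :=
    hconn _ _ hunion hdisj (sdiff_nonempty.mpr hP) (sdiff_nonempty.mpr hQ)
  simp only [mem_inter, mem_sdiff] at hx hy
  rcases hedges e (mem_filter.mp he).1 with h | h
  exacts [hx.2.2 (h hx.1), hy.2.2 (h hy.1)]

section Forest

variable {F : Fin m → UnifHypergraph k}

variable (F) in
def vertsBelow (n : ℕ) : Finset ℕ :=
  (univ.filter fun i : Fin m => (i : ℕ) < n).sup fun i => (F i).verts

variable (F) in
def separator (j : Fin m) : Finset ℕ :=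
  (F j).verts ∩ vertsBelow F j

theorem mem_vertsBelow {n x : ℕ} :
    x ∈ vertsBelow F n ↔ ∃ i : Fin m, (i : ℕ) < n ∧ x ∈ (F i).verts := by
  simp [vertsBelow]

theorem verts_subset_vertsBelow {i : Fin m} {n : ℕ} (h : (i : ℕ) < n) :
    (F i).verts ⊆ vertsBelow F n := fun _ hx => mem_vertsBelow.mpr ⟨i, h, hx⟩

theorem vertsBelow_mono : Monotone (vertsBelow F) := fun _ _ h _ hx => by
  obtain ⟨i, hi, hxi⟩ := mem_vertsBelow.mp hx
  exact mem_vertsBelow.mpr ⟨i, hi.trans_le h, hxi⟩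

theorem vertsBelow_zero : vertsBelow F 0 = ∅ := by
  simp [vertsBelow]

theorem vertsBelow_succ (j : Fin m) : vertsBelow F (j + 1) = vertsBelow F j ∪ (F j).verts := by
  ext x
  simp only [mem_vertsBelow, mem_union, Nat.lt_succ_iff_lt_or_eq, or_and_right, exists_or]
  simp [Fin.val_eq_val]

theorem ForestCond.separator_cases (hF : ForestCond F) (j : Fin m) :
    separator F j = ∅ ∨ (∃ v, separator F j = {v}) ∨
      (separator F j ∈ (F j).edges ∧ ∃ i < j, separator F j ∈ (F i).edges) := by
  by_cases hj : (j : ℕ) = 0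
  · left
    rw [separator, hj, vertsBelow_zero, inter_empty]
  · exact hF j hj

theorem ForestCond.separator_mem_edges (hF : ForestCond F) {j : Fin m} {s : Finset ℕ}
    (hs : s ⊆ separator F j) (hcard : 2 ≤ s.card) :
    separator F j ∈ (F j).edges ∧ ∃ i < j, separator F j ∈ (F i).edges := by
  rcases hF.separator_cases j with h | ⟨v, h⟩ | h
  · rw [h, subset_empty] at hs
    simp [hs] at hcard
  · have := card_le_card (h ▸ hs)
    rw [card_singleton] at this
    omega
  · exact h

theorem ForestCond.mem_edges_of_subset_separator (hF : ForestCond F) (hk : 2 ≤ k) {j : Fin m}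
    {e : Finset ℕ} (hcard : e.card = k) (hs : e ⊆ separator F j) :
    e ∈ (F j).edges ∧ ∃ i < j, e ∈ (F i).edges := by
  obtain ⟨hj, hi⟩ := hF.separator_mem_edges hs (hcard ▸ hk)
  obtain rfl : e = separator F j :=
    eq_of_subset_of_card_le hs (by rw [(F j).card_edges _ hj, hcard])
  exact ⟨hj, hi⟩

theorem ForestCond.exists_mem_edges_not_subset_vertsBelow (hF : ForestCond F) (hk : 2 ≤ k)
    {a : Fin m} {e : Finset ℕ} (he : e ∈ (F a).edges) :
    ∃ b, e ∈ (F b).edges ∧ ¬e ⊆ vertsBelow F b := by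
  induction a using WellFoundedLT.induction with
  | _ a ih =>
    by_cases hbelow : e ⊆ vertsBelow F a
    -- an edge lying below its owner is the separator, hence owned earlier
    · obtain ⟨-, i, hia, hi⟩ := hF.mem_edges_of_subset_separator hk ((F a).card_edges e he)
        (subset_inter ((F a).edges_subset e he) hbelow)
      exact ih i hia hi
    · exact ⟨a, he, hbelow⟩

theorem ForestCond.mem_edges_of_subset_verts (hF : ForestCond F) (hk : 2 ≤ k) {a b : Fin m}
    {e : Finset ℕ} (he : e ∈ (F a).edges) (hb : e ⊆ (F b).verts) : e ∈ (F b).edges := by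
  obtain ⟨c, hc, hcbelow⟩ := hF.exists_mem_edges_not_subset_vertsBelow hk he
  rcases lt_trichotomy c b with hcb | rfl | hbc
  · exact (hF.mem_edges_of_subset_separator hk ((F c).card_edges e hc) (subset_inter hb
      (((F c).edges_subset e hc).trans (verts_subset_vertsBelow hcb)))).1
  · exact hc
  · exact absurd (hb.trans (verts_subset_vertsBelow hbc)) hcbelow

theorem ForestCond.eq_of_two_le_card_inter (hF : ForestCond F) (hlin : ∀ i, (F i).Linear)
    {a b : Fin m} {e f : Finset ℕ} (he : e ∈ (F a).edges) (hf : f ∈ (F b).edges)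
    (h2 : 2 ≤ (e ∩ f).card) : e = f := by
  have hk : 2 ≤ k :=
    h2.trans ((card_le_card inter_subset_left).trans_eq ((F a).card_edges e he))
  obtain ⟨c, hec, hc⟩ := hF.exists_mem_edges_not_subset_vertsBelow hk he
  obtain ⟨d, hfd, hd⟩ := hF.exists_mem_edges_not_subset_vertsBelow hk hf
  clear he hf a b
  wlog hcd : c ≤ d generalizing c d e f
  · exact (this (by rwa [inter_comm]) d hfd hd c hec hc (le_of_not_ge hcd)).symm
  rcases hcd.lt_or_eq with hcd | rfl
  · have hsep : e ∩ f ⊆ separator F d := fun x hx =>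
      mem_inter.mpr ⟨(F d).edges_subset f hfd (mem_inter.mp hx).2,
        verts_subset_vertsBelow hcd ((F c).edges_subset e hec (mem_inter.mp hx).1)⟩
    have hfsep : f = separator F d := by
      by_contra hne
      have := card_le_card (subset_inter inter_subset_right hsep)
      have := hlin d f hfd _ (hF.separator_mem_edges hsep h2).1 hne
      omega
    exact absurd (hfsep ▸ inter_subset_right) hd
  · by_contra hne
    have := hlin c e hec f hfd hne
    omega

variable {J : UnifHypergraph k}

theorem ForestCond.connected_delete_separator (hF : ForestCond F)
    (hJ : ∀ e, e ∈ J.edges ↔ (∃ a, e ∈ (F a).edges) ∧ e ⊆ J.verts)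
    (hlin : ∀ i, (F i).Linear) (hins : J.Inseparable) (j : Fin m) :
    (J.delete (J.verts ∩ separator F j)).Connected := by
  have hk := two_le_of_inseparable hins
  generalize hS : separator F j = S
  have hzS : J.verts ∩ S ⊆ S := inter_subset_right
  by_cases hsmall : S.card ≤ 1
  · have hz : (J.verts ∩ S).card ≤ 1 := (card_le_card hzS).trans hsmall
    exact hins.connected_delete_of_card_lt inter_subset_left (by omega) fun e _ =>
      (card_le_card inter_subset_right).trans hz
  have hSedge : S ∈ (F j).edges :=
    hS ▸ (hF.separator_mem_edges (j := j) subset_rfl (by rw [hS]; omega)).1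
  by_cases hSJ : S ⊆ J.verts
  · rw [inter_eq_right.mpr hSJ]
    exact hins.2.2 S ((hJ S).mpr ⟨⟨j, hSedge⟩, hSJ⟩)
  -- otherwise the deleted set misses a vertex of the edge `S`, and linearity of the union
  -- makes it independent in `J`
  have hcard : (J.verts ∩ S).card < k :=
    (card_lt_card (ssubset_of_subset_of_ne hzS fun h => hSJ (h ▸ inter_subset_left))).trans_eq
      ((F j).card_edges S hSedge)
  refine hins.connected_delete_of_card_lt inter_subset_left hcard fun e he => ?_
  obtain ⟨⟨a, hea⟩, heJ⟩ := (hJ e).mp he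
  by_contra! h2
  have hlt := h2.trans_le (card_le_card (inter_subset_inter_left hzS))
  obtain rfl := hF.eq_of_two_le_card_inter hlin hea hSedge hlt
  exact hSJ heJ

theorem ForestCond.edge_subset_vertsBelow_or_verts (hF : ForestCond F)
    (hJ : ∀ e, e ∈ J.edges ↔ (∃ a, e ∈ (F a).edges) ∧ e ⊆ J.verts)
    (hk : 2 ≤ k) {j : Fin m} (hsub : J.verts ⊆ vertsBelow F (j + 1))
    {e : Finset ℕ} (he : e ∈ J.edges) :
    e ⊆ vertsBelow F j ∨ e ⊆ (F j).verts := by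
  obtain ⟨⟨a, hea⟩, heJ⟩ := (hJ e).mp he
  obtain ⟨b, heb, hbelow⟩ := hF.exists_mem_edges_not_subset_vertsBelow hk hea
  rcases lt_trichotomy b j with hbj | rfl | hjb
  · exact .inl (((F b).edges_subset e heb).trans (verts_subset_vertsBelow hbj))
  · exact .inr ((F b).edges_subset e heb)
  · exact absurd ((heJ.trans hsub).trans (vertsBelow_mono (Fin.lt_def.mp hjb))) hbelow

theorem ForestCond.exists_verts_subset_verts (hF : ForestCond F)
    (hJ : ∀ e, e ∈ J.edges ↔ (∃ a, e ∈ (F a).edges) ∧ e ⊆ J.verts)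
    (hlin : ∀ i, (F i).Linear) (hins : J.Inseparable) {n : ℕ} (hn : n ≤ m)
    (hsub : J.verts ⊆ vertsBelow F n) :
    ∃ i, J.verts ⊆ (F i).verts := by
  have hk := two_le_of_inseparable hins
  induction n with
  | zero =>
    obtain ⟨e, he⟩ := card_pos.mp (by have := hins.1.2; omega : 0 < J.edges.card)
    have := card_le_card ((J.edges_subset e he).trans hsub)
    rw [vertsBelow_zero, card_empty, J.card_edges e he] at this
    omega
  | succ n ih =>
    let j : Fin m := ⟨n, hn⟩
    have hsub' : J.verts ⊆ vertsBelow F (j + 1) := hsub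
    have hcover : J.verts ⊆ (F j).verts ∪ vertsBelow F j := by
      rw [union_comm, ← vertsBelow_succ j]
      exact hsub'
    by_cases hbelow : J.verts ⊆ vertsBelow F j
    · exact ih (by omega) hbelow
    by_cases hj : J.verts ⊆ (F j).verts
    · exact ⟨j, hj⟩
    exact absurd (hF.connected_delete_separator hJ hlin hins j)
      (not_connected_delete_inter hcover hj hbelow
        fun e he => (hF.edge_subset_vertsBelow_or_verts hJ hk hsub' he).symm)

theorem ForestCond.isInducedSub_of_verts_subset (hF : ForestCond F)
    (hJ : ∀ e, e ∈ J.edges ↔ (∃ a, e ∈ (F a).edges) ∧ e ⊆ J.verts)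
    (hk : 2 ≤ k) {i : Fin m} (hi : J.verts ⊆ (F i).verts) : J.IsInducedSub (F i) := by
  refine ⟨hi, fun e => ⟨fun he => ?_, fun he => (hJ e).mpr ⟨⟨i, he.1⟩, he.2⟩⟩⟩
  obtain ⟨⟨a, hea⟩, heJ⟩ := (hJ e).mp he
  exact ⟨hF.mem_edges_of_subset_verts hk hea (heJ.trans hi), heJ⟩

theorem mem_unionOf_edges_iff {𝒻 : Finset (UnifHypergraph k)}
    (h𝒻 : ∀ H, H ∈ (𝒻 : Set (UnifHypergraph k)) ↔ ∃ i, F i = H) {e : Finset ℕ} :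
    e ∈ (unionOf 𝒻).edges ↔ ∃ i, e ∈ (F i).edges := by
  simp only [unionOf, mem_sup]
  constructor
  · rintro ⟨H, hH, he⟩
    obtain ⟨i, rfl⟩ := (h𝒻 H).mp hH
    exact ⟨i, he⟩
  · rintro ⟨i, he⟩
    exact ⟨F i, (h𝒻 (F i)).mpr ⟨i, rfl⟩, he⟩

theorem unionOf_verts_subset_vertsBelow {𝒻 : Finset (UnifHypergraph k)}
    (h𝒻 : ∀ H, H ∈ (𝒻 : Set (UnifHypergraph k)) ↔ ∃ i, F i = H) :
    (unionOf 𝒻).verts ⊆ vertsBelow F m := by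
  intro x hx
  obtain ⟨H, hH, hx⟩ := mem_sup.mp hx
  obtain ⟨i, rfl⟩ := (h𝒻 H).mp hH
  exact verts_subset_vertsBelow i.isLt hx

end Forest

end UnifHypergraph

/-- Let `𝒻` be a forest of copies of linear `k`-uniform hypergraphs and let `J` be an
induced subhypergraph of `⋃𝒻`.  If `J` is `(e,v)`-inseparable, then `J` is an induced
subhypergraph of some member of `𝒻`. -/
theorem inseparable_subhypergraph_of_forest (k : ℕ) (𝒻 : Finset (UnifHypergraph k))
    (hlin : ∀ F ∈ 𝒻, F.Linear)
    (hforest : UnifHypergraph.IsForestOfCopies (𝒻 : Set (UnifHypergraph k)))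
    (J : UnifHypergraph k)
    (hJ : J.IsInducedSub (UnifHypergraph.unionOf 𝒻))
    (hins : J.Inseparable) :
    ∃ F ∈ 𝒻, J.IsInducedSub F := by
  obtain ⟨m, F, -, h𝒻, hF⟩ := hforest
  have hmem : ∀ i, F i ∈ 𝒻 := fun i => (h𝒻 (F i)).mpr ⟨i, rfl⟩
  have hJF : ∀ e, e ∈ J.edges ↔ (∃ i, e ∈ (F i).edges) ∧ e ⊆ J.verts := fun e => by
    rw [hJ.2 e, UnifHypergraph.mem_unionOf_edges_iff h𝒻]
  obtain ⟨i, hi⟩ := hF.exists_verts_subset_verts hJF (fun i => hlin _ (hmem i)) hins le_rfl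
    (hJ.1.trans (UnifHypergraph.unionOf_verts_subset_vertsBelow h𝒻))
  exact ⟨F i, hmem i,
    hF.isInducedSub_of_verts_subset hJF (UnifHypergraph.two_le_of_inseparable hins) hi⟩
end

section
/- For every sufficiently large integer n divisible by 16, the ordered 3-uniform hypergraph S_n is linear and (e,v)-inseparable, and the derived graph F_{S_n} is 4-connected. Consequently, there exist infinitely many ordered, (e,v)-inseparable, linear 3-uniform hypergraphs S such that the derived graph F_S is 4-connected. -/
/-- A finite `k`-uniform hypergraph with vertices in `ℕ`; the ordering of the vertices
is the one inherited from `ℕ`. -/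
structure KUniformHypergraph (k : ℕ) where
  verts : Finset ℕ
  edges : Finset (Finset ℕ)
  card_edges : ∀ e ∈ edges, e.card = k
  edges_subset : ∀ e ∈ edges, e ⊆ verts

namespace KUniformHypergraph

variable {k : ℕ}

/-- A hypergraph is linear if any two distinct edges share at most one vertex. -/
def Linear (H : KUniformHypergraph k) : Prop :=
  ∀ e ∈ H.edges, ∀ f ∈ H.edges, e ≠ f → (e ∩ f).card ≤ 1

/-- A hypergraph is connected if for every partition of its vertex set into two
nonempty parts some edge meets both parts. -/
def Connected (H : KUniformHypergraph k) : Prop :=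
  ∀ X Y : Finset ℕ, X ∪ Y = H.verts → Disjoint X Y → X.Nonempty → Y.Nonempty →
    ∃ e ∈ H.edges, (e ∩ X).Nonempty ∧ (e ∩ Y).Nonempty

/-- Deleting a set `z` of vertices (and all edges meeting `z`). -/
def delete (H : KUniformHypergraph k) (z : Finset ℕ) : KUniformHypergraph k where
  verts := H.verts \ z
  edges := H.edges.filter fun e => Disjoint e z
  card_edges := fun e he => H.card_edges e (Finset.mem_filter.mp he).1
  edges_subset := fun e he x hx =>
    Finset.mem_sdiff.mpr ⟨H.edges_subset e (Finset.mem_filter.mp he).1 hx,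
      fun hxz => Finset.disjoint_left.mp (Finset.mem_filter.mp he).2 hx hxz⟩

/-- A linear `k`-uniform hypergraph is `(e,v)`-inseparable if it is connected with at
least two edges, remains connected after deleting any set of fewer than `k` vertices no
two of which lie in a common edge, and remains connected after deleting the vertex set
of any edge. -/
def Inseparable (H : KUniformHypergraph k) : Prop :=
  (H.Connected ∧ 2 ≤ H.edges.card) ∧
  (∀ z : Finset ℕ, z ⊆ H.verts → z.card < k →
    (∀ x ∈ z, ∀ y ∈ z, x ≠ y → ∀ e ∈ H.edges, ¬(x ∈ e ∧ y ∈ e)) →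
    (H.delete z).Connected) ∧
  (∀ e ∈ H.edges, (H.delete e).Connected)

/-- The derived graph `F_S` of an ordered `3`-uniform hypergraph `S`: vertices `a, b`
are adjacent iff there is an edge `{x, y, z}` of `S` with `x < y < z` whose outer
vertices are `a` and `b`. -/
def derived (S : KUniformHypergraph 3) : SimpleGraph ℕ where
  Adj a b := ∃ x y z : ℕ, x < y ∧ y < z ∧ ({x, y, z} : Finset ℕ) ∈ S.edges ∧
    ((a = x ∧ b = z) ∨ (a = z ∧ b = x))
  symm := by
    constructor
    rintro a b ⟨x, y, z, h1, h2, h3, h4⟩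
    exact ⟨x, y, z, h1, h2, h3, by tauto⟩
  loopless := by
    constructor
    rintro a ⟨x, y, z, h1, h2, h3, (⟨rfl, rfl⟩ | ⟨rfl, rfl⟩)⟩ <;> omega

/-- The derived graph of `S` is `4`-connected: it has more than `4` vertices and
deleting any set of fewer than `4` vertices leaves it connected. -/
def DerivedFourConnected (S : KUniformHypergraph 3) : Prop :=
  4 < S.verts.card ∧
  ∀ U : Finset ℕ, U ⊆ S.verts → U.card < 4 →
    ((derived S).induce ((S.verts : Set ℕ) \ (U : Set ℕ))).Connected

end KUniformHypergraph

/-- The ordered `3`-uniform hypergraph `S_n` on vertex set `{1, …, n}` whose edges are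
the triples `{x, y, z}` of distinct elements with `x + y + z = n` or `x + y + z = 2n`. -/
def Sn (n : ℕ) : KUniformHypergraph 3 where
  verts := Finset.Icc 1 n
  edges := ((Finset.Icc 1 n).powersetCard 3).filter fun e => e.sum id = n ∨ e.sum id = 2 * n
  card_edges := fun e he => (Finset.mem_powersetCard.mp (Finset.mem_filter.mp he).1).2
  edges_subset := fun e he => (Finset.mem_powersetCard.mp (Finset.mem_filter.mp he).1).1

/-!
Remove a set `D` of at most three vertices from `S_n`. For a surviving vertex `x`, the edge
through `x` and `w` has third vertex `n - x - w` or `2n - x - w`, and only `5 + 2|D|` values of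
`w` make that vertex collide with `x`, `w` or `D`. Hence any two survivors have a common
neighbour among any `26` consecutive vertices, which makes `S_n`, `S_n - z` and `S_n - e`
connected. Linearity holds because two vertices of an edge determine the third modulo `n`.

In the derived graph of `S_{16q}` minus at most three vertices, every window of four consecutive
vertices contains a survivor. A surviving hub `h ∈ (8q, 8q + 4]` is adjacent to every vertex
`≤ 4q - 3`, and every other vertex reaches such a small vertex in one or two steps through
survivors chosen in suitable windows.
-/

open Finset

namespace KUniformHypergraph

variable {k : ℕ}

theorem mem_delete_edges {H : KUniformHypergraph k} {z e : Finset ℕ} :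
    e ∈ (H.delete z).edges ↔ e ∈ H.edges ∧ Disjoint e z :=
  mem_filter

@[simp]
theorem delete_empty (H : KUniformHypergraph k) : H.delete ∅ = H := by
  cases H
  simp [delete]

theorem connected_of_forall_common_neighbor (H : KUniformHypergraph k)
    (h : ∀ u ∈ H.verts, ∀ v ∈ H.verts, ∃ w,
      (∃ e ∈ H.edges, u ∈ e ∧ w ∈ e) ∧ (∃ e ∈ H.edges, v ∈ e ∧ w ∈ e)) :
    H.Connected := by
  intro X Y hXY hdisj ⟨u, hu⟩ ⟨v, hv⟩
  obtain ⟨w, ⟨e, he, hue, hwe⟩, ⟨f, hf, hvf, hwf⟩⟩ :=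
    h u (hXY ▸ mem_union_left Y hu) v (hXY ▸ mem_union_right X hv)
  rcases mem_union.1 (hXY ▸ H.edges_subset e he hwe) with hwX | hwY
  · exact ⟨f, hf, ⟨w, mem_inter.2 ⟨hwf, hwX⟩⟩, ⟨v, mem_inter.2 ⟨hvf, hv⟩⟩⟩
  · exact ⟨e, he, ⟨u, mem_inter.2 ⟨hue, hu⟩⟩, ⟨w, mem_inter.2 ⟨hwe, hwY⟩⟩⟩

end KUniformHypergraph

open KUniformHypergraph

theorem sum_triple {a b c : ℕ} (hab : a ≠ b) (hac : a ≠ c) (hbc : b ≠ c) :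
    ({a, b, c} : Finset ℕ).sum id = a + b + c := by
  simp [sum_insert, hab, hac, hbc, add_assoc]

theorem triple_mem_edges_Sn {n a b c : ℕ} (hab : a ≠ b) (hac : a ≠ c) (hbc : b ≠ c)
    (ha : a ∈ Icc 1 n) (hb : b ∈ Icc 1 n) (hc : c ∈ Icc 1 n)
    (hs : a + b + c = n ∨ a + b + c = 2 * n) :
    ({a, b, c} : Finset ℕ) ∈ (Sn n).edges := by
  refine mem_filter.2 ⟨mem_powersetCard.2 ⟨?_, card_eq_three.2 ⟨a, b, c, hab, hac, hbc, rfl⟩⟩, ?_⟩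
  · simp [insert_subset_iff, ha, hb, hc]
  · rwa [sum_triple hab hac hbc]

theorem sum_eq_of_mem_edges_Sn {n : ℕ} {e : Finset ℕ} (he : e ∈ (Sn n).edges) :
    e.sum id = n ∨ e.sum id = 2 * n :=
  (mem_filter.1 he).2

theorem eq_triple_of_card_eq_three {e : Finset ℕ} (he : e.card = 3) {x y z : ℕ}
    (hx : x ∈ e) (hy : y ∈ e) (hz : z ∈ e) (hxy : x ≠ y) (hxz : x ≠ z) (hyz : y ≠ z) :
    e = {x, y, z} :=
  (eq_of_subset_of_card_le (by simp [insert_subset_iff, hx, hy, hz])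
    (by rw [he, card_eq_three.2 ⟨x, y, z, hxy, hxz, hyz, rfl⟩])).symm

theorem Sn_linear (n : ℕ) : (Sn n).Linear := by
  intro e he f hf hne
  by_contra! hcard
  obtain ⟨x, hx, y, hy, hxy⟩ := one_lt_card.1 hcard
  rw [mem_inter] at hx hy
  have hcard_e := (Sn n).card_edges e he
  have hcard_f := (Sn n).card_edges f hf
  have exists_outside {s t : Finset ℕ} (hs : s.card = 3) (ht : t.card = 3) (hst : s ≠ t) :
      ∃ z ∈ s, z ∉ t :=
    not_subset.1 fun h => hst (eq_of_subset_of_card_le h (by rw [hs, ht]))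
  obtain ⟨z, hze, hzf⟩ := exists_outside hcard_e hcard_f hne
  obtain ⟨z', hz'f, hz'e⟩ := exists_outside hcard_f hcard_e hne.symm
  have hxz : x ≠ z := fun h => hzf (h ▸ hx.2)
  have hyz : y ≠ z := fun h => hzf (h ▸ hy.2)
  have hxz' : x ≠ z' := fun h => hz'e (h ▸ hx.1)
  have hyz' : y ≠ z' := fun h => hz'e (h ▸ hy.1)
  have hsum_e := sum_eq_of_mem_edges_Sn he
  have hsum_f := sum_eq_of_mem_edges_Sn hf
  rw [eq_triple_of_card_eq_three hcard_e hx.1 hy.1 hze hxy hxz hyz, sum_triple hxy hxz hyz]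
    at hsum_e
  rw [eq_triple_of_card_eq_three hcard_f hx.2 hy.2 hz'f hxy hxz' hyz', sum_triple hxy hxz' hyz']
    at hsum_f
  have hz := mem_Icc.1 ((Sn n).edges_subset e he hze)
  have hz' := mem_Icc.1 ((Sn n).edges_subset f hf hz'f)
  obtain rfl : z = z' := by omega
  exact hzf hz'f

theorem two_le_card_edges_Sn {n : ℕ} (hn : 8 ≤ n) : 2 ≤ (Sn n).edges.card := by
  have mem (b : ℕ) (hb : 2 ≤ b ∧ b ≤ 3) : ({1, b, n - 1 - b} : Finset ℕ) ∈ (Sn n).edges :=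
    triple_mem_edges_Sn (by omega) (by omega) (by omega) (by simp; omega) (by simp; omega)
      (by simp; omega) (by omega)
  refine one_lt_card.2 ⟨_, mem 2 (by omega), _, mem 3 (by omega), fun h => ?_⟩
  have : 2 ∈ ({1, 3, n - 1 - 3} : Finset ℕ) := h ▸ by simp
  simp at this
  omega

theorem exists_mem_Ico_notMem (s : Finset ℕ) (a : ℕ) {k : ℕ} (h : s.card < k) :
    ∃ w ∈ Ico a (a + k), w ∉ s :=
  exists_mem_notMem_of_card_lt_card (by rwa [Nat.card_Ico, Nat.add_sub_cancel_left])

/-- The `w` for which the third vertex `n - x - w` or `2n - x - w` of an edge through `x` and `w`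
could equal `x` or `w` or lie in `D`. -/
def badPartners (n : ℕ) (D : Finset ℕ) (x : ℕ) : Finset ℕ :=
  {x, n - 2 * x, 2 * n - 2 * x, (n - x) / 2, (2 * n - x) / 2} ∪
    D.image (n - x - ·) ∪ D.image (2 * n - x - ·)

theorem card_badPartners_le (n : ℕ) (D : Finset ℕ) (x : ℕ) :
    (badPartners n D x).card ≤ 5 + 2 * D.card := by
  unfold badPartners
  grw [card_union_le, card_union_le, card_image_le, card_image_le, card_le_five]
  omega

theorem exists_edge_delete_Sn_of_notMem_badPartners {n x w : ℕ} {D : Finset ℕ}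
    (hx : x ∈ Icc 1 n) (hw : w ∈ Icc 1 n) (hxD : x ∉ D) (hwD : w ∉ D)
    (hbad : w ∉ badPartners n D x) :
    ∃ e ∈ ((Sn n).delete D).edges, x ∈ e ∧ w ∈ e := by
  simp only [badPartners, mem_union, mem_insert, mem_singleton, mem_image, not_or, not_exists,
    not_and] at hbad
  obtain ⟨⟨⟨hwx, h2x, h2x', hhalf, hhalf'⟩, hD⟩, hD'⟩ := hbad
  rw [mem_Icc] at hx hw
  obtain ⟨a, haD, hxa, haw, ha, hs⟩ : ∃ a ∉ D, x ≠ a ∧ a ≠ w ∧ a ∈ Icc 1 n ∧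
      (x + a + w = n ∨ x + a + w = 2 * n) := by
    rcases lt_or_ge (x + w) n with hlt | hge
    · exact ⟨n - x - w, fun h => hD _ h (by omega), by omega, by omega, by simp; omega, by omega⟩
    · exact ⟨2 * n - x - w, fun h => hD' _ h (by omega), by omega, by omega, by simp; omega,
        by omega⟩
  refine ⟨{x, a, w}, mem_delete_edges.2 ⟨triple_mem_edges_Sn hxa (Ne.symm hwx) haw
    (mem_Icc.2 hx) ha (mem_Icc.2 hw) hs, ?_⟩, by simp, by simp⟩
  simp [hxD, haD, hwD]

theorem Sn_delete_connected {n : ℕ} (hn : 26 ≤ n) {D : Finset ℕ} (hD : D.card ≤ 3) :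
    ((Sn n).delete D).Connected := by
  refine connected_of_forall_common_neighbor _ fun u hu v hv => ?_
  simp only [delete, Sn, mem_sdiff] at hu hv
  have hcard : (badPartners n D u ∪ badPartners n D v ∪ D).card < 26 := by
    grw [card_union_le, card_union_le, card_badPartners_le, card_badPartners_le]
    omega
  obtain ⟨w, hw, hwbad⟩ := exists_mem_Ico_notMem _ 1 hcard
  simp only [mem_union, not_or] at hwbad
  have hw' : w ∈ Icc 1 n := by simp at hw ⊢; omega
  exact ⟨w, exists_edge_delete_Sn_of_notMem_badPartners hu.1 hw' hu.2 hwbad.2 hwbad.1.1,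
    exists_edge_delete_Sn_of_notMem_badPartners hv.1 hw' hv.2 hwbad.2 hwbad.1.2⟩

theorem Sn_inseparable {n : ℕ} (hn : 26 ≤ n) : (Sn n).Inseparable := by
  refine ⟨⟨?_, two_le_card_edges_Sn (by omega)⟩, fun z _ hz _ => Sn_delete_connected hn (by omega),
    fun e he => Sn_delete_connected hn ((Sn n).card_edges e he).le⟩
  simpa using Sn_delete_connected hn (D := ∅) (by simp)

namespace SimpleGraph

variable {V : Type*} {G : SimpleGraph V} {s : Set V} {a b c : V}

variable (G s) in
def ReachableIn (a b : V) : Prop :=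
  ∃ (ha : a ∈ s) (hb : b ∈ s), (G.induce s).Reachable ⟨a, ha⟩ ⟨b, hb⟩

theorem ReachableIn.symm : G.ReachableIn s a b → G.ReachableIn s b a
  | ⟨ha, hb, h⟩ => ⟨hb, ha, h.symm⟩

theorem ReachableIn.trans : G.ReachableIn s a b → G.ReachableIn s b c → G.ReachableIn s a c
  | ⟨ha, _, h⟩, ⟨_, hc, h'⟩ => ⟨ha, hc, h.trans h'⟩

theorem Adj.reachableIn (h : G.Adj a b) (ha : a ∈ s) (hb : b ∈ s) : G.ReachableIn s a b :=
  ⟨ha, hb, Adj.reachable (G := G.induce s) h⟩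

theorem connected_induce_of_forall_reachableIn (hc : c ∈ s) (h : ∀ a ∈ s, G.ReachableIn s a c) :
    (G.induce s).Connected := by
  have : Nonempty s := ⟨⟨c, hc⟩⟩
  refine Connected.mk fun ⟨a, ha⟩ ⟨b, hb⟩ => ?_
  obtain ⟨_, _, hac⟩ := h a ha
  obtain ⟨_, _, hbc⟩ := h b hb
  exact hac.trans hbc.symm

end SimpleGraph

open SimpleGraph

theorem Sn_derived_adj {n x y z : ℕ} (hx : 1 ≤ x) (hxy : x < y) (hyz : y < z) (hz : z ≤ n)
    (hs : x + y + z = n ∨ x + y + z = 2 * n) : (Sn n).derived.Adj x z :=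
  ⟨x, y, z, hxy, hyz, triple_mem_edges_Sn (by omega) (by omega) (by omega) (by simp; omega)
    (by simp; omega) (by simp; omega) hs, Or.inl ⟨rfl, rfl⟩⟩

theorem mem_verts_Sn_diff {n t : ℕ} {U : Finset ℕ} :
    t ∈ ((Sn n).verts : Set ℕ) \ (U : Set ℕ) ↔ (1 ≤ t ∧ t ≤ n) ∧ t ∉ U := by
  simp [Sn]

theorem exists_mem_verts_Sn_diff {n a : ℕ} {U : Finset ℕ} (hU : U.card ≤ 3) (ha : 1 ≤ a)
    (han : a + 3 ≤ n) : ∃ w ∈ ((Sn n).verts : Set ℕ) \ (U : Set ℕ), a ≤ w ∧ w ≤ a + 3 := by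
  obtain ⟨w, hw, hwU⟩ := exists_mem_Ico_notMem U a (k := 4) (by omega)
  rw [mem_Ico] at hw
  exact ⟨w, mem_verts_Sn_diff.2 ⟨by omega, hwU⟩, by omega⟩

section DerivedSn

variable {q h u : ℕ} {s : Set ℕ}

theorem reachableIn_hub_of_small (hh : h ∈ s) (hh' : 8 * q < h ∧ h ≤ 8 * q + 4) (hu : u ∈ s)
    (hu' : 1 ≤ u ∧ u ≤ 4 * q - 3) : (Sn (16 * q)).derived.ReachableIn s u h :=
  (Sn_derived_adj (y := 16 * q - u - h) (by omega) (by omega) (by omega) (by omega)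
    (by omega)).reachableIn hu hh

theorem reachableIn_hub_of_large (hq : 2 ≤ q)
    (hs : ∀ a, 1 ≤ a → a + 3 ≤ 16 * q → ∃ w ∈ s, a ≤ w ∧ w ≤ a + 3)
    (hh : h ∈ s) (hh' : 8 * q < h ∧ h ≤ 8 * q + 4) (hu : u ∈ s)
    (hu' : 8 * q < u ∧ u ≤ 16 * q - 9) : (Sn (16 * q)).derived.ReachableIn s u h := by
  obtain ⟨z, hz, hz'⟩ := hs 1 le_rfl (by omega)
  have hzu : (Sn (16 * q)).derived.Adj z u := Sn_derived_adj (y := 16 * q - z - u) (by omega)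
    (by omega) (by omega) (by omega) (by omega)
  exact (hzu.reachableIn hz hu).symm.trans (reachableIn_hub_of_small hh hh' hz (by omega))

theorem reachableIn_hub_of_top (hq : 6 ≤ q)
    (hs : ∀ a, 1 ≤ a → a + 3 ≤ 16 * q → ∃ w ∈ s, a ≤ w ∧ w ≤ a + 3)
    (hh : h ∈ s) (hh' : 8 * q < h ∧ h ≤ 8 * q + 4) (hu : u ∈ s)
    (hu' : 16 * q - 8 ≤ u ∧ u ≤ 16 * q) : (Sn (16 * q)).derived.ReachableIn s u h := by
  obtain ⟨z, hz, hz'⟩ := hs 17 (by omega) (by omega)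
  have hzu : (Sn (16 * q)).derived.Adj z u := Sn_derived_adj (y := 32 * q - z - u) (by omega)
    (by omega) (by omega) (by omega) (by omega)
  exact (hzu.reachableIn hz hu).symm.trans (reachableIn_hub_of_small hh hh' hz (by omega))

theorem reachableIn_hub_of_medium (hq : 8 ≤ q)
    (hs : ∀ a, 1 ≤ a → a + 3 ≤ 16 * q → ∃ w ∈ s, a ≤ w ∧ w ≤ a + 3)
    (hh : h ∈ s) (hh' : 8 * q < h ∧ h ≤ 8 * q + 4) (hu : u ∈ s)
    (hu' : 4 * q - 2 ≤ u ∧ u ≤ 8 * q) : (Sn (16 * q)).derived.ReachableIn s u h := by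
  obtain ⟨w, hw, hw'⟩ := hs (14 * q + 3) (by omega) (by omega)
  have huw : (Sn (16 * q)).derived.Adj u w := Sn_derived_adj (y := 32 * q - u - w) (by omega)
    (by omega) (by omega) (by omega) (by omega)
  exact (huw.reachableIn hu hw).trans (reachableIn_hub_of_large (by omega) hs hh hh' hw (by omega))

end DerivedSn

theorem Sn_derivedFourConnected {q : ℕ} (hq : 8 ≤ q) : DerivedFourConnected (Sn (16 * q)) := by
  refine ⟨by simp [Sn]; omega, fun U _ hU => ?_⟩
  have hs a (ha : 1 ≤ a) (haq : a + 3 ≤ 16 * q) :=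
    exists_mem_verts_Sn_diff (U := U) (by omega) ha haq
  obtain ⟨h, hh, hh'⟩ := hs (8 * q + 1) (by omega) (by omega)
  refine connected_induce_of_forall_reachableIn hh fun u hu => ?_
  have hu_le := (mem_verts_Sn_diff.1 hu).1
  rcases le_or_gt u (4 * q - 3) with hu₁ | hu₁
  · exact reachableIn_hub_of_small hh (by omega) hu ⟨hu_le.1, hu₁⟩
  rcases le_or_gt u (8 * q) with hu₂ | hu₂
  · exact reachableIn_hub_of_medium hq hs hh (by omega) hu ⟨by omega, hu₂⟩
  rcases le_or_gt u (16 * q - 9) with hu₃ | hu₃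
  · exact reachableIn_hub_of_large (by omega) hs hh (by omega) hu ⟨hu₂, hu₃⟩
  · exact reachableIn_hub_of_top (by omega) hs hh (by omega) hu ⟨by omega, hu_le.2⟩

/-- For every sufficiently large `n` divisible by `16`, the hypergraph `S_n` is linear
and `(e,v)`-inseparable and its derived graph is `4`-connected; consequently there are
infinitely many (i.e. with arbitrarily many vertices) ordered, `(e,v)`-inseparable,
linear `3`-uniform hypergraphs `S` whose derived graph `F_S` is `4`-connected. -/
theorem Sn_inseparable_and_derived_four_connected :
    (∃ N : ℕ, ∀ n : ℕ, N ≤ n → 16 ∣ n →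
      (Sn n).Linear ∧ (Sn n).Inseparable ∧ KUniformHypergraph.DerivedFourConnected (Sn n)) ∧
    (∀ N : ℕ, ∃ S : KUniformHypergraph 3, N ≤ S.verts.card ∧
      S.Linear ∧ S.Inseparable ∧ KUniformHypergraph.DerivedFourConnected S) := by
  have main (q : ℕ) (hq : 8 ≤ q) :
      (Sn (16 * q)).Linear ∧ (Sn (16 * q)).Inseparable ∧ DerivedFourConnected (Sn (16 * q)) :=
    ⟨Sn_linear _, Sn_inseparable (by omega), Sn_derivedFourConnected hq⟩
  refine ⟨⟨128, fun n hn ⟨q, hq⟩ => hq ▸ main q (by omega)⟩,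
    fun N => ⟨_, ?_, main (N + 8) (by omega)⟩⟩
  simp [Sn]
  omega
end

section
/- In the 3-uniform hypergraph S_n with n sufficiently large and divisible by 16, any two distinct vertices x, x' cannot be separated by deleting fewer than (n−8)/3 other vertices: for every set W ⊆ [n] \ {x, x'} with |W| < (n−8)/3, the vertices x and x' lie in the same connected component of S_n − W. -/
/-- `Sedge n x y z` : `{x, y, z}` with `x < y < z` is an edge of the `3`-uniform
hypergraph `S_n` on `{1, …, n}`, i.e. `x + y + z = n` or `x + y + z = 2n`. -/
def Sedge (n x y z : ℕ) : Prop :=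
  1 ≤ x ∧ x < y ∧ y < z ∧ z ≤ n ∧ (x + y + z = n ∨ x + y + z = 2 * n)

/-- `u` and `v` lie in a common edge of `S_n − W` (an edge of `S_n` avoiding `W`). -/
def SAdjAvoid (n : ℕ) (W : Finset ℕ) (u v : ℕ) : Prop :=
  ∃ x y z : ℕ, Sedge n x y z ∧ x ∉ W ∧ y ∉ W ∧ z ∉ W ∧
    u ∈ ({x, y, z} : Set ℕ) ∧ v ∈ ({x, y, z} : Set ℕ)

/-- The third vertex of an edge of `S_n` containing `x` and `b`. -/
def pick (n x b : ℕ) : ℕ := if b + x < n then n - x - b else 2 * n - x - b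

lemma pick_pick (n x b : ℕ) (hx1 : 1 ≤ x) (hxn : x ≤ n) (hb1 : 1 ≤ b) (hbn : b ≤ n)
    (hbx : b ≠ x) : pick n x (pick n x b) = b := by
  unfold pick; split_ifs <;> omega

lemma pick_spec (n x b : ℕ) (hx1 : 1 ≤ x) (hxn : x ≤ n) (hb1 : 1 ≤ b) (hbn : b ≤ n)
    (hbx : b ≠ x) :
    1 ≤ pick n x b ∧ pick n x b ≤ n ∧
      (x + pick n x b + b = n ∨ x + pick n x b + b = 2 * n) := by
  unfold pick; split_ifs <;> omega

lemma pick_eq_x (n x b : ℕ) (hx1 : 1 ≤ x) (hxn : x ≤ n) (hb1 : 1 ≤ b) (hbn : b ≤ n)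
    (h : pick n x b = x) : b = (if 2 * x < n then n - 2 * x else 2 * n - 2 * x) := by
  unfold pick at h; split_ifs at h ⊢ <;> omega

lemma pick_eq_self (n x b : ℕ) (hx1 : 1 ≤ x) (hxn : x ≤ n) (hb1 : 1 ≤ b) (hbn : b ≤ n)
    (h : pick n x b = b) : b = (n - x) / 2 ∨ b = (2 * n - x) / 2 := by
  unfold pick at h; split_ifs at h <;> omega

lemma card8 (a b c d e f g h : ℕ) : ({a, b, c, d, e, f, g, h} : Finset ℕ).card ≤ 8 := by
  have h1 := Finset.card_insert_le a ({b, c, d, e, f, g, h} : Finset ℕ)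
  have h2 := Finset.card_insert_le b ({c, d, e, f, g, h} : Finset ℕ)
  have h3 := Finset.card_insert_le c ({d, e, f, g, h} : Finset ℕ)
  have h4 := Finset.card_insert_le d ({e, f, g, h} : Finset ℕ)
  have h5 := Finset.card_insert_le e ({f, g, h} : Finset ℕ)
  have h6 := Finset.card_insert_le f ({g, h} : Finset ℕ)
  have h7 := Finset.card_insert_le g ({h} : Finset ℕ)
  have h8 : ({h} : Finset ℕ).card = 1 := Finset.card_singleton h
  omega

lemma adj_aux (n : ℕ) (W : Finset ℕ) (u v w : ℕ)
    (hu1 : 1 ≤ u) (hun : u ≤ n) (hv1 : 1 ≤ v) (hvn : v ≤ n) (hw1 : 1 ≤ w) (hwn : w ≤ n)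
    (huv : u ≠ v) (huw : u ≠ w) (hvw : v ≠ w)
    (hsum : u + v + w = n ∨ u + v + w = 2 * n)
    (hWu : u ∉ W) (hWv : v ∉ W) (hWw : w ∉ W) : SAdjAvoid n W u v := by
  rcases lt_trichotomy u v with h1 | h1 | h1
  · rcases lt_trichotomy v w with h2 | h2 | h2
    · exact ⟨u, v, w, ⟨by omega, by omega, by omega, by omega, by omega⟩,
        hWu, hWv, hWw, by simp, by simp⟩
    · exact absurd h2 hvw
    · rcases lt_trichotomy u w with h3 | h3 | h3
      · exact ⟨u, w, v, ⟨by omega, by omega, by omega, by omega, by omega⟩,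
          hWu, hWw, hWv, by simp, by simp⟩
      · exact absurd h3 huw
      · exact ⟨w, u, v, ⟨by omega, by omega, by omega, by omega, by omega⟩,
          hWw, hWu, hWv, by simp, by simp⟩
  · exact absurd h1 huv
  · rcases lt_trichotomy u w with h2 | h2 | h2
    · exact ⟨v, u, w, ⟨by omega, by omega, by omega, by omega, by omega⟩,
        hWv, hWu, hWw, by simp, by simp⟩
    · exact absurd h2 huw
    · rcases lt_trichotomy v w with h3 | h3 | h3
      · exact ⟨v, w, u, ⟨by omega, by omega, by omega, by omega, by omega⟩,
          hWv, hWw, hWu, by simp, by simp⟩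
      · exact absurd h3 hvw
      · exact ⟨w, v, u, ⟨by omega, by omega, by omega, by omega, by omega⟩,
          hWw, hWv, hWu, by simp, by simp⟩

/-- In `S_n` with `n` sufficiently large and divisible by `16`, two distinct vertices
`x, x' ∈ {1, …, n}` cannot be separated by deleting fewer than `(n − 8)/3` other
vertices: for every `W ⊆ {1, …, n} \ {x, x'}` with `3|W| < n − 8`, the vertices `x`
and `x'` lie in the same connected component of `S_n − W`, i.e. they are joined by a
walk along edges of `S_n` avoiding `W`. -/
theorem Sn_separation : ∃ N : ℕ, ∀ n : ℕ, N ≤ n → 16 ∣ n →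
    ∀ x x' : ℕ, x ∈ Finset.Icc 1 n → x' ∈ Finset.Icc 1 n → x ≠ x' →
    ∀ W : Finset ℕ, W ⊆ Finset.Icc 1 n → x ∉ W → x' ∉ W →
      3 * W.card + 8 < n →
      Relation.ReflTransGen (SAdjAvoid n W) x x' := by
  classical
  refine ⟨0, fun n _ _ x x' hx hx' hxx' W hWsub hxW hx'W hcard => ?_⟩
  rw [Finset.mem_Icc] at hx hx'
  obtain ⟨hx1, hxn⟩ := hx
  obtain ⟨hx'1, hx'n⟩ := hx'
  set B8 : Finset ℕ :=
    {x, x', (if 2 * x < n then n - 2 * x else 2 * n - 2 * x),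
      (if 2 * x' < n then n - 2 * x' else 2 * n - 2 * x'),
      (n - x) / 2, (2 * n - x) / 2, (n - x') / 2, (2 * n - x') / 2} with hB8
  set Bad : Finset ℕ := W ∪ W.image (pick n x) ∪ W.image (pick n x') ∪ B8 with hBad
  have hBadcard : Bad.card ≤ 3 * W.card + 8 := by
    have h1 := Finset.card_union_le (W ∪ W.image (pick n x) ∪ W.image (pick n x')) B8
    have h2 := Finset.card_union_le (W ∪ W.image (pick n x)) (W.image (pick n x'))
    have h3 := Finset.card_union_le W (W.image (pick n x))
    have h4 := Finset.card_image_le (s := W) (f := pick n x)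
    have h5 := Finset.card_image_le (s := W) (f := pick n x')
    have h6 := card8 x x' (if 2 * x < n then n - 2 * x else 2 * n - 2 * x)
      (if 2 * x' < n then n - 2 * x' else 2 * n - 2 * x')
      ((n - x) / 2) ((2 * n - x) / 2) ((n - x') / 2) ((2 * n - x') / 2)
    have h7 : B8.card ≤ 8 := by rw [hB8]; exact h6
    rw [hBad]
    omega
  have hne : (Finset.Icc 1 n \ Bad).Nonempty := by
    rw [← Finset.card_pos]
    have h1 := Finset.le_card_sdiff Bad (Finset.Icc 1 n)
    rw [Nat.card_Icc] at h1
    omega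
  obtain ⟨b, hb⟩ := hne
  rw [Finset.mem_sdiff, Finset.mem_Icc] at hb
  obtain ⟨⟨hb1, hbn⟩, hbBad⟩ := hb
  simp only [hBad, Finset.mem_union, not_or] at hbBad
  obtain ⟨⟨⟨hbW, hbWA⟩, hbWC⟩, hbB8⟩ := hbBad
  simp only [hB8, Finset.mem_insert, Finset.mem_singleton, not_or] at hbB8
  obtain ⟨hbx, hbx', hbe1, hbe2, hbe3, hbe4, hbe5, hbe6⟩ := hbB8
  simp only [Finset.mem_image, not_exists] at hbWA hbWC
  -- the vertex a with {x, a, b} an edge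
  set a := pick n x b with ha
  have haspec := pick_spec n x b hx1 hxn hb1 hbn hbx
  have haa : pick n x a = b := by rw [ha]; exact pick_pick n x b hx1 hxn hb1 hbn hbx
  have haW : a ∉ W := fun h => hbWA a ⟨h, haa⟩
  have hax : a ≠ x := fun h => hbe1 (pick_eq_x n x b hx1 hxn hb1 hbn h)
  have hab : a ≠ b := by
    intro h
    rcases pick_eq_self n x b hx1 hxn hb1 hbn h with h' | h'
    · exact hbe3 h'
    · exact hbe4 h'
  -- the vertex c with {x', c, b} an edge
  set c := pick n x' b with hc
  have hcspec := pick_spec n x' b hx'1 hx'n hb1 hbn hbx'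
  have hcc : pick n x' c = b := by rw [hc]; exact pick_pick n x' b hx'1 hx'n hb1 hbn hbx'
  have hcW : c ∉ W := fun h => hbWC c ⟨h, hcc⟩
  have hcx' : c ≠ x' := fun h => hbe2 (pick_eq_x n x' b hx'1 hx'n hb1 hbn h)
  have hcb : c ≠ b := by
    intro h
    rcases pick_eq_self n x' b hx'1 hx'n hb1 hbn h with h' | h'
    · exact hbe5 h'
    · exact hbe6 h'
  have hsum1 : x + a + b = n ∨ x + a + b = 2 * n := by rw [ha]; exact haspec.2.2
  have hsum2 : x' + c + b = n ∨ x' + c + b = 2 * n := by rw [hc]; exact hcspec.2.2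
  have step1 : SAdjAvoid n W x b :=
    adj_aux n W x b a hx1 hxn hb1 hbn haspec.1 haspec.2.1
      (Ne.symm hbx) (Ne.symm hax) (Ne.symm hab)
      (by omega)
      hxW hbW haW
  have step2 : SAdjAvoid n W b x' :=
    adj_aux n W b x' c hb1 hbn hx'1 hx'n hcspec.1 hcspec.2.1
      hbx' (Ne.symm hcb) (Ne.symm hcx')
      (by omega)
      hbW hx'W hcW
  exact Relation.ReflTransGen.head step1 (Relation.ReflTransGen.single step2)
end

section
/- For every graph F with at least one edge and every nonempty forest of copies 𝒻 of F, the union graph 𝔉 = ⋃𝒻 satisfies m₂(𝔉) = m₂(F). -/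
open SimpleGraph

/-- `d2v v e` : the `2`-density of a graph with `v` vertices and `e ≥ 1` edges. -/
noncomputable def d2v (v e : ℕ) : ℝ :=
  if 3 ≤ v then ((e : ℝ) - 1) / ((v : ℝ) - 2) else 1

/-- The `2`-density of a graph (given as a subgraph of the complete graph on `ℕ`). -/
noncomputable def d2 (H : Subgraph (⊤ : SimpleGraph ℕ)) : ℝ :=
  d2v H.verts.ncard H.edgeSet.ncard

/-- The maximum `2`-density `m₂`: the maximum of `d2` over all subgraphs with at least
one edge. -/
noncomputable def m2 (H : Subgraph (⊤ : SimpleGraph ℕ)) : ℝ :=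
  sSup {x : ℝ | ∃ H' ≤ H, H'.edgeSet.Nonempty ∧ x = d2 H'}

/-- The condition that an enumeration `F 0, F 1, …` of graphs (given as subgraphs of an
ambient graph `G`) forms a forest of copies. -/
def ForestCond {V : Type*} {G : SimpleGraph V} {m : ℕ} (F : Fin m → G.Subgraph) : Prop :=
  ∀ j : Fin m, (j : ℕ) ≠ 0 →
    ((F j).verts ∩ ⋃ (i : Fin m) (_ : i < j), (F i).verts) = ∅ ∨
    (∃ v, ((F j).verts ∩ ⋃ (i : Fin m) (_ : i < j), (F i).verts) = {v}) ∨
    (∃ x y, (F j).Adj x y ∧ (∃ i : Fin m, i < j ∧ (F i).Adj x y) ∧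
      ((F j).verts ∩ ⋃ (i : Fin m) (_ : i < j), (F i).verts) = {x, y})

/-- A set of graphs is a *forest of copies* if it admits an enumeration satisfying
`ForestCond`. -/
def IsForestOfCopies {V : Type*} {G : SimpleGraph V} (𝒻 : Set G.Subgraph) : Prop :=
  ∃ (m : ℕ) (F : Fin m → G.Subgraph), Function.Injective F ∧
    (∀ H, H ∈ 𝒻 ↔ ∃ i, F i = H) ∧ ForestCond F

/-!
For `M ≥ 1`, `m₂ ≤ M` says `e(K) - 1 ≤ M (v(K) - 2)` for every subgraph `K` with an edge, and this
bound survives gluing two graphs along at most a vertex or a common edge: the parts of `K` in the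
two graphs share `t ≤ 2` vertices and `s` edges with `s ≥ 1` if `t = 2` (after passing to induced
parts), so adding their bounds gives `e(K) - 1 ≤ M (v(K) - 2) + (M (t - 2) + 1 - s) ≤ M (v(K) - 2)`.
Adding the copies one at a time yields `m₂(⋃𝒻) ≤ m₂(F)`; conversely `⋃𝒻` contains a copy of `F`.
-/

open Set

namespace SimpleGraph.Subgraph

variable {V W : Type*} {G : SimpleGraph V} {G' : SimpleGraph W} {H : G.Subgraph}

lemma edgeSet_subset_sym2_verts (H : G.Subgraph) : H.edgeSet ⊆ H.verts.sym2 := by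
  rintro ⟨u, v⟩ h
  exact ⟨H.edge_vert h, H.edge_vert h.symm⟩

lemma finite_edgeSet (h : H.verts.Finite) : H.edgeSet.Finite := by
  refine Finite.subset ?_ H.edgeSet_subset_sym2_verts
  rw [sym2_eq_mk_image]
  exact (h.prod h).image _

lemma ncard_verts_map {f : G →g G'} (hf : Function.Injective f) (H : G.Subgraph) :
    (H.map f).verts.ncard = H.verts.ncard :=
  ncard_image_of_injective _ hf

lemma ncard_edgeSet_map {f : G →g G'} (hf : Function.Injective f) (H : G.Subgraph) :
    (H.map f).edgeSet.ncard = H.edgeSet.ncard := by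
  rw [edgeSet_map, ncard_image_of_injective _ (Sym2.map.injective hf)]

lemma two_le_ncard_verts (h : H.verts.Finite) (he : H.edgeSet.Nonempty) :
    2 ≤ H.verts.ncard := by
  obtain ⟨⟨u, v⟩, huv⟩ := he
  rw [← ncard_pair (Adj.ne huv)]
  exact ncard_le_ncard (pair_subset (H.edge_vert huv) (H.edge_vert huv.symm)) h

lemma ncard_edgeSet_le_one (h : H.verts.ncard = 2) : H.edgeSet.ncard ≤ 1 := by
  obtain ⟨x, y, -, hxy⟩ := ncard_eq_two.mp h
  have hsub : H.edgeSet ⊆ {s(x, y)} := by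
    rintro ⟨u, v⟩ huv
    have hu : u ∈ ({x, y} : Set V) := hxy ▸ H.edge_vert huv
    have hv : v ∈ ({x, y} : Set V) := hxy ▸ H.edge_vert huv.symm
    rcases hu with rfl | rfl <;> rcases hv with rfl | rfl
    all_goals first | exact absurd rfl (Adj.ne huv) | simp [Sym2.eq_swap]
  simpa using ncard_le_ncard hsub

def MeetInAtMostAnEdge (G₁ G₂ : G.Subgraph) : Prop :=
  (G₁.verts ∩ G₂.verts).Subsingleton ∨
    ∃ x y, G₁.Adj x y ∧ G₂.Adj x y ∧ G₁.verts ∩ G₂.verts = {x, y}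

lemma MeetInAtMostAnEdge.induce {G₁ G₂ : G.Subgraph} (h : MeetInAtMostAnEdge G₁ G₂)
    (S : Set V) : MeetInAtMostAnEdge (G₁.induce (S ∩ G₁.verts)) (G₂.induce (S ∩ G₂.verts)) := by
  have hS : (G₁.induce (S ∩ G₁.verts)).verts ∩ (G₂.induce (S ∩ G₂.verts)).verts =
      S ∩ (G₁.verts ∩ G₂.verts) := by
    simp only [induce_verts]
    exact inter_inter_distrib_left _ _ _ |>.symm
  rw [MeetInAtMostAnEdge, hS]
  rcases h with h | ⟨x, y, h₁, h₂, hxy⟩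
  · exact .inl (h.anti inter_subset_right)
  rw [hxy]
  by_cases hx : x ∈ S
  · by_cases hy : y ∈ S
    · refine .inr ⟨x, y, ⟨⟨hx, h₁.fst_mem⟩, ⟨hy, h₁.snd_mem⟩, h₁⟩,
        ⟨⟨hx, h₂.fst_mem⟩, ⟨hy, h₂.snd_mem⟩, h₂⟩, ?_⟩
      exact inter_eq_right.2 (pair_subset hx hy)
    · refine .inl ((subsingleton_singleton (a := x)).anti ?_)
      rintro z ⟨hz, rfl | rfl⟩ <;> simp_all
  · refine .inl ((subsingleton_singleton (a := y)).anti ?_)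
    rintro z ⟨hz, rfl | rfl⟩ <;> simp_all

end SimpleGraph.Subgraph

open SimpleGraph.Subgraph

section TwoDensity

variable {H H₁ H₂ K : Subgraph (⊤ : SimpleGraph ℕ)} {M : ℝ}

def twoDensities (H : Subgraph (⊤ : SimpleGraph ℕ)) : Set ℝ :=
  {x : ℝ | ∃ H' ≤ H, H'.edgeSet.Nonempty ∧ x = d2 H'}

lemma m2_eq_sSup_twoDensities (H : Subgraph (⊤ : SimpleGraph ℕ)) :
    m2 H = sSup (twoDensities H) := rfl

lemma twoDensities_mono (h : H₁ ≤ H₂) : twoDensities H₁ ⊆ twoDensities H₂ := by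
  rintro _ ⟨K, hK, hKe, rfl⟩
  exact ⟨K, hK.trans h, hKe, rfl⟩

lemma d2_mem_twoDensities (he : H.edgeSet.Nonempty) : d2 H ∈ twoDensities H :=
  ⟨H, le_rfl, he, rfl⟩

lemma twoDensities_bot : twoDensities ⊥ = ∅ := by
  refine eq_empty_of_forall_notMem ?_
  rintro _ ⟨K, hK, ⟨e, he⟩, rfl⟩
  simpa [Subgraph.edgeSet_bot] using edgeSet_mono hK he

lemma twoDensities_finite (h : H.verts.Finite) : (twoDensities H).Finite := by
  refine (((finite_Iic H.verts.ncard).prod (finite_Iic H.edgeSet.ncard)).image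
    fun p => d2v p.1 p.2).subset ?_
  rintro _ ⟨K, hK, -, rfl⟩
  exact ⟨(K.verts.ncard, K.edgeSet.ncard),
    ⟨ncard_le_ncard hK.1 h, ncard_le_ncard (edgeSet_mono hK) (finite_edgeSet h)⟩, rfl⟩

/-- `d2 K ≤ M` with the denominator cleared. -/
def EdgeBound (M : ℝ) (K : Subgraph (⊤ : SimpleGraph ℕ)) : Prop :=
  (K.edgeSet.ncard : ℝ) - 1 ≤ M * (K.verts.ncard - 2)

/-- At two vertices both sides hold: `d2 = 1 ≤ M`, and there is at most one edge. -/
lemma d2_le_iff_edgeBound (hM : 1 ≤ M) (hK : K.verts.Finite) (he : K.edgeSet.Nonempty) :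
    d2 K ≤ M ↔ EdgeBound M K := by
  rw [d2, d2v, EdgeBound]
  split_ifs with h3
  · have h3' : (3 : ℝ) ≤ K.verts.ncard := by exact_mod_cast h3
    rw [div_le_iff₀ (by linarith)]
  · have hv : K.verts.ncard = 2 := by have := two_le_ncard_verts hK he; omega
    have he1 : (K.edgeSet.ncard : ℝ) ≤ 1 := by exact_mod_cast ncard_edgeSet_le_one hv
    simp only [hv, Nat.cast_ofNat, sub_self, mul_zero]
    constructor <;> intro <;> linarith

lemma one_le_m2 (h : H.verts.Finite) (he : H.edgeSet.Nonempty) : 1 ≤ m2 H := by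
  obtain ⟨⟨u, v⟩, huv⟩ := he
  have hd : d2 ((⊤ : SimpleGraph ℕ).subgraphOfAdj (H.adj_sub huv)) = 1 := by
    rw [d2, d2v, if_neg (by rw [subgraphOfAdj_verts, ncard_pair (Adj.ne huv)]; omega)]
  rw [← hd]
  exact le_csSup (twoDensities_finite h).bddAbove ⟨_, subgraphOfAdj_le_of_adj H huv,
    ⟨s(u, v), by rw [edgeSet_subgraphOfAdj]; rfl⟩, rfl⟩

lemma d2_map {W : Type*} {X : SimpleGraph W} {f : X →g ⊤} (hf : Function.Injective f)
    (K : X.Subgraph) :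
    d2 (K.map f) = d2v K.verts.ncard K.edgeSet.ncard := by
  rw [d2, ncard_verts_map hf, ncard_edgeSet_map hf]

end TwoDensity

section Iso

variable {H₁ H₂ : Subgraph (⊤ : SimpleGraph ℕ)}

lemma twoDensities_subset_of_iso (e : H₁.coe ≃g H₂.coe) :
    twoDensities H₁ ⊆ twoDensities H₂ := by
  rintro _ ⟨K, hK, hKe, rfl⟩
  have hK : (H₁.restrict K).map H₁.hom = K := by
    rw [← Subgraph.coeSubgraph, coeSubgraph_restrict_eq, inf_eq_right.2 hK]
  have hf : Function.Injective (H₂.hom.comp e.toHom) := hom_injective.comp e.injective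
  refine ⟨(H₁.restrict K).map (H₂.hom.comp e.toHom), ?_, ?_, ?_⟩
  · rw [map_comp]
    exact coeSubgraph_le _
  · rw [← hK, Subgraph.edgeSet_map, image_nonempty] at hKe
    rw [Subgraph.edgeSet_map]
    exact hKe.image _
  · rw [d2_map hf, ← d2_map hom_injective, hK]

lemma verts_finite_of_iso (e : H₁.coe ≃g H₂.coe) (h : H₂.verts.Finite) : H₁.verts.Finite :=
  have := h.to_subtype
  finite_coe_iff.1 (.of_equiv _ e.toEquiv.symm)

lemma twoDensities_eq_of_iso (e : H₁.coe ≃g H₂.coe) : twoDensities H₁ = twoDensities H₂ :=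
  (twoDensities_subset_of_iso e).antisymm (twoDensities_subset_of_iso e.symm)

end Iso

section Glue

variable {A B G₁ G₂ : Subgraph (⊤ : SimpleGraph ℕ)} {M : ℝ}

lemma edgeBound_sup (hM : 1 ≤ M) (hA : A.verts.Finite) (hB : B.verts.Finite)
    (hAM : EdgeBound M A) (hBM : EdgeBound M B) (hAB : MeetInAtMostAnEdge A B) :
    EdgeBound M (A ⊔ B) := by
  unfold EdgeBound at *
  have hv := ncard_union_add_ncard_inter _ _ hA hB
  have he := ncard_union_add_ncard_inter _ _ (finite_edgeSet hA) (finite_edgeSet hB)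
  rw [← verts_sup] at hv
  rw [← Subgraph.edgeSet_sup] at he
  rcases hAB with ht | ⟨x, y, hxA, hxB, ht⟩
  · have ht' : ((A.verts ∩ B.verts).ncard : ℝ) ≤ 1 := by
      exact_mod_cast (ncard_le_one_iff (ht.finite)).2 fun ha hb => ht ha hb
    have hv' : ((A ⊔ B).verts.ncard : ℝ) + (A.verts ∩ B.verts).ncard =
        A.verts.ncard + B.verts.ncard := by exact_mod_cast hv
    have he' : ((A ⊔ B).edgeSet.ncard : ℝ) ≤ A.edgeSet.ncard + B.edgeSet.ncard := by
      exact_mod_cast (Nat.le.intro he)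
    nlinarith
  · have hs : 1 ≤ (A.edgeSet ∩ B.edgeSet).ncard :=
      (ncard_pos ((finite_edgeSet hA).inter_of_left _)).2 ⟨s(x, y), hxA, hxB⟩
    rw [ht, ncard_pair (Adj.ne hxA)] at hv
    have hv' : ((A ⊔ B).verts.ncard : ℝ) + 2 = A.verts.ncard + B.verts.ncard := by
      exact_mod_cast hv
    have he' : ((A ⊔ B).edgeSet.ncard : ℝ) + 1 ≤ A.edgeSet.ncard + B.edgeSet.ncard := by
      exact_mod_cast (by omega : (A ⊔ B).edgeSet.ncard + 1 ≤ A.edgeSet.ncard + B.edgeSet.ncard)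
    nlinarith

lemma edgeBound_of_le_of_edgeSet_subset {H : Subgraph (⊤ : SimpleGraph ℕ)} (hM : 0 ≤ M)
    (hBH : B ≤ H) (hH : H.verts.Finite) (hE : H.edgeSet ⊆ B.edgeSet)
    (hBM : EdgeBound M B) : EdgeBound M H := by
  unfold EdgeBound at *
  have he : (H.edgeSet.ncard : ℝ) ≤ B.edgeSet.ncard := by
    exact_mod_cast ncard_le_ncard hE (finite_edgeSet (hH.subset hBH.1))
  have hv : (B.verts.ncard : ℝ) ≤ H.verts.ncard := by exact_mod_cast ncard_le_ncard hBH.1 hH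
  nlinarith

/-- A subgraph of `G₁ ⊔ G₂` has the vertices of, and at most the edges of, the union of the
subgraphs of `G₁` and `G₂` induced on its vertex set; these still meet in at most an edge. -/
lemma upperBounds_twoDensities_sup (hM : 1 ≤ M) (h₁ : G₁.verts.Finite) (h₂ : G₂.verts.Finite)
    (hb₁ : M ∈ upperBounds (twoDensities G₁)) (hb₂ : M ∈ upperBounds (twoDensities G₂))
    (h : MeetInAtMostAnEdge G₁ G₂) : M ∈ upperBounds (twoDensities (G₁ ⊔ G₂)) := by
  rintro _ ⟨K, hK, hKe, rfl⟩
  set A := G₁.induce (K.verts ∩ G₁.verts)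
  set B := G₂.induce (K.verts ∩ G₂.verts)
  have hAG : A ≤ G₁ := (induce_mono_right inter_subset_right).trans induce_self_verts.le
  have hBG : B ≤ G₂ := (induce_mono_right inter_subset_right).trans induce_self_verts.le
  have hAfin : A.verts.Finite := h₁.subset inter_subset_right
  have hBfin : B.verts.Finite := h₂.subset inter_subset_right
  have hverts : (A ⊔ B).verts = K.verts := by
    rw [verts_sup, induce_verts, induce_verts, ← inter_union_distrib_left]
    exact inter_eq_left.2 hK.1
  have hKAB : K ≤ A ⊔ B := by
    refine ⟨hverts.ge, fun u v huv => ?_⟩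
    rcases hK.2 huv with h | h
    · exact .inl ⟨⟨huv.fst_mem, h.fst_mem⟩, ⟨huv.snd_mem, h.snd_mem⟩, h⟩
    · exact .inr ⟨⟨huv.fst_mem, h.fst_mem⟩, ⟨huv.snd_mem, h.snd_mem⟩, h⟩
  have hABfin : (A ⊔ B).verts.Finite := hAfin.union hBfin
  have hABe : (A ⊔ B).edgeSet.Nonempty := hKe.mono (edgeSet_mono hKAB)
  have hbound : EdgeBound M (A ⊔ B) := by
    rcases A.edgeSet.eq_empty_or_nonempty with hA0 | hAe
    · have hBe : B.edgeSet.Nonempty := by rwa [Subgraph.edgeSet_sup, hA0, empty_union] at hABe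
      refine edgeBound_of_le_of_edgeSet_subset (by linarith) le_sup_right hABfin
        (by rw [Subgraph.edgeSet_sup, hA0, empty_union]) ?_
      exact (d2_le_iff_edgeBound hM hBfin hBe).1 (hb₂ ⟨B, hBG, hBe, rfl⟩)
    rcases B.edgeSet.eq_empty_or_nonempty with hB0 | hBe
    · have hAe' : A.edgeSet.Nonempty := by rwa [Subgraph.edgeSet_sup, hB0, union_empty] at hABe
      refine edgeBound_of_le_of_edgeSet_subset (by linarith) le_sup_left hABfin
        (by rw [Subgraph.edgeSet_sup, hB0, union_empty]) ?_
      exact (d2_le_iff_edgeBound hM hAfin hAe').1 (hb₁ ⟨A, hAG, hAe', rfl⟩)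
    exact edgeBound_sup hM hAfin hBfin
      ((d2_le_iff_edgeBound hM hAfin hAe).1 (hb₁ ⟨A, hAG, hAe, rfl⟩))
      ((d2_le_iff_edgeBound hM hBfin hBe).1 (hb₂ ⟨B, hBG, hBe, rfl⟩)) (h.induce K.verts)
  have he : (K.edgeSet.ncard : ℝ) ≤ (A ⊔ B).edgeSet.ncard := by
    exact_mod_cast ncard_le_ncard (edgeSet_mono hKAB) (finite_edgeSet hABfin)
  rw [d2_le_iff_edgeBound hM (hverts ▸ hABfin) hKe, EdgeBound, ← hverts]
  exact (sub_le_sub_right he 1).trans hbound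

end Glue

section PartialSup

variable {V : Type*} {G : SimpleGraph V} {m : ℕ} (F : Fin m → G.Subgraph)

def partialSup (k : ℕ) : G.Subgraph := ⨆ (i : Fin m) (_ : (i : ℕ) < k), F i

lemma verts_partialSup (k : ℕ) :
    (partialSup F k).verts = ⋃ (i : Fin m) (_ : (i : ℕ) < k), (F i).verts := by
  simp only [partialSup, Subgraph.verts_iSup]

lemma partialSup_adj {k : ℕ} {x y : V} :
    (partialSup F k).Adj x y ↔ ∃ i : Fin m, (i : ℕ) < k ∧ (F i).Adj x y := by
  simp only [partialSup, Subgraph.iSup_adj, exists_prop]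

lemma partialSup_zero : partialSup F 0 = ⊥ := by
  simp [partialSup]

lemma partialSup_succ {k : ℕ} (hk : k < m) :
    partialSup F (k + 1) = partialSup F k ⊔ F ⟨k, hk⟩ := by
  refine le_antisymm (iSup₂_le fun i hi => ?_) (sup_le (iSup₂_le fun i hi => ?_) ?_)
  · rcases Nat.lt_succ_iff_lt_or_eq.mp hi with hi | rfl
    · exact (le_iSup₂ (f := fun (i : Fin m) (_ : (i : ℕ) < k) => F i) i hi).trans le_sup_left
    · exact le_sup_right
  · exact le_iSup₂ (f := fun (i : Fin m) (_ : (i : ℕ) < k + 1) => F i) i (Nat.lt_succ_of_lt hi)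
  · exact le_iSup₂ (f := fun (i : Fin m) (_ : (i : ℕ) < k + 1) => F i) ⟨k, hk⟩ k.lt_succ_self

lemma partialSup_self : partialSup F m = ⨆ i, F i :=
  le_antisymm (iSup₂_le fun i _ => le_iSup F i)
    (iSup_le fun i => le_iSup₂ (f := fun (i : Fin m) (_ : (i : ℕ) < m) => F i) i i.isLt)

variable {F}

lemma ForestCond.meetInAtMostAnEdge (hF : ForestCond F) (k : Fin m) :
    MeetInAtMostAnEdge (partialSup F k) (F k) := by
  rcases eq_or_ne (k : ℕ) 0 with hk | hk
  · left
    rw [hk, partialSup_zero, Subgraph.verts_bot, empty_inter]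
    exact subsingleton_empty
  rw [MeetInAtMostAnEdge, inter_comm, verts_partialSup]
  rcases hF k hk with h | ⟨v, h⟩ | ⟨x, y, hk, ⟨i, hi, hi'⟩, h⟩
  · exact .inl (h ▸ subsingleton_empty)
  · exact .inl (h ▸ subsingleton_singleton)
  · exact .inr ⟨x, y, (partialSup_adj F).2 ⟨i, hi, hi'⟩, hk, h⟩

end PartialSup

lemma upperBounds_twoDensities_iSup {m : ℕ} {F : Fin m → Subgraph (⊤ : SimpleGraph ℕ)} {M : ℝ}
    (hM : 1 ≤ M) (hF : ForestCond F) (hfin : ∀ i, (F i).verts.Finite)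
    (hb : ∀ i, M ∈ upperBounds (twoDensities (F i))) :
    M ∈ upperBounds (twoDensities (⨆ i, F i)) := by
  have hfin' (k : ℕ) : (partialSup F k).verts.Finite := by
    rw [verts_partialSup]
    exact finite_iUnion fun i => finite_iUnion fun _ => hfin i
  suffices ∀ k ≤ m, M ∈ upperBounds (twoDensities (partialSup F k)) by
    simpa only [partialSup_self] using this m le_rfl
  intro k hk
  induction k with
  | zero => simp [partialSup_zero, twoDensities_bot]
  | succ k ih =>
    rw [partialSup_succ F hk]
    exact upperBounds_twoDensities_sup hM (hfin' k) (hfin _) (ih (by omega)) (hb _)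
      (hF.meetInAtMostAnEdge ⟨k, hk⟩)

/-- For every (finite) graph `F` with at least one edge and every nonempty forest of
copies `𝒻` of `F`, the union graph `𝔉 = ⋃𝒻` satisfies `m₂(𝔉) = m₂(F)`. -/
theorem m2_of_forest_of_copies (F : Subgraph (⊤ : SimpleGraph ℕ))
    (hFfin : F.verts.Finite) (hFe : F.edgeSet.Nonempty)
    (𝒻 : Set (Subgraph (⊤ : SimpleGraph ℕ))) (hne : 𝒻.Nonempty)
    (hforest : IsForestOfCopies 𝒻)
    (hcopies : ∀ H ∈ 𝒻, Nonempty (H.coe ≃g F.coe)) :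
    m2 (sSup 𝒻) = m2 F := by
  obtain ⟨m, C, -, hmem, hC⟩ := hforest
  have h𝒻 : 𝒻 = range C := ext fun H => hmem H
  have hCF (i : Fin m) : Nonempty ((C i).coe ≃g F.coe) := hcopies _ (h𝒻 ▸ mem_range_self i)
  have hbF : m2 F ∈ upperBounds (twoDensities F) :=
    fun _ hx => le_csSup (twoDensities_finite hFfin).bddAbove hx
  have hbound : m2 F ∈ upperBounds (twoDensities (sSup 𝒻)) := by
    rw [h𝒻, sSup_range]
    refine upperBounds_twoDensities_iSup (one_le_m2 hFfin hFe) hC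
      (fun i => verts_finite_of_iso (hCF i).some hFfin) fun i => ?_
    rwa [twoDensities_eq_of_iso (hCF i).some]
  obtain ⟨H₀, hH₀⟩ := hne
  have hsub : twoDensities F ⊆ twoDensities (sSup 𝒻) :=
    twoDensities_eq_of_iso (hcopies H₀ hH₀).some ▸ twoDensities_mono (le_sSup hH₀)
  have hFne : (twoDensities F).Nonempty := ⟨_, d2_mem_twoDensities hFe⟩
  rw [m2_eq_sSup_twoDensities, m2_eq_sSup_twoDensities]
  exact le_antisymm (csSup_le (hFne.mono hsub) hbound) (csSup_le_csSup ⟨_, hbound⟩ hFne hsub)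
end

section
/- Let F be a graph with d₂(F) > 1 and let ℓ ≥ 3. Suppose F_1,…,F_ℓ is a cyclic sequence of copies of F such that no edge belongs to three of these copies and, for all distinct i, j ∈ ℤ/ℓℤ, |E(F_i) ∩ E(F_j)| = 1 if j = i ± 1 and |E(F_i) ∩ E(F_j)| = 0 otherwise. Then the union 𝔠 = ⋃_{i∈ℤ/ℓℤ} F_i satisfies d₂(𝔠) > d₂(F). -/
open SimpleGraph

private lemma dc_aux {ι α : Type*} [Fintype ι] [DecidableEq α] [DecidableEq ι]
    (A : ι → Finset α) :
    ∑ i, (A i).card =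
      ∑ x ∈ Finset.univ.biUnion A, (Finset.univ.filter (fun i => x ∈ A i)).card := by
  classical
  have h : ∀ i, (A i).card = ∑ x ∈ Finset.univ.biUnion A, if x ∈ A i then 1 else 0 := by
    intro i
    rw [← Finset.card_filter, Finset.filter_mem_eq_inter,
      Finset.inter_eq_right.mpr (Finset.subset_biUnion_of_mem A (Finset.mem_univ i))]
  simp_rw [h, Finset.card_filter]
  exact Finset.sum_comm

private lemma arc_card {n : ℕ} [NeZero n] {T : Finset (ZMod n)} (hT : T.Nonempty)
    (hTu : T ≠ Finset.univ) : T.card + 1 ≤ (T ∪ T.image (· + 1)).card := by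
  classical
  by_cases h : T.image (· + 1) ⊆ T
  · exfalso
    have himg : T.image (· + 1) = T :=
      Finset.eq_of_subset_of_card_le h
        (le_of_eq (Finset.card_image_of_injective T (add_left_injective 1)).symm)
    obtain ⟨x0, hx0⟩ := hT
    have hstep : ∀ y ∈ T, y + 1 ∈ T := fun y hy => himg ▸ Finset.mem_image_of_mem _ hy
    have hall : ∀ k : ℕ, x0 + (k : ZMod n) ∈ T := by
      intro k; induction k with
      | zero => simpa using hx0
      | succ m ih =>
        push_cast
        rw [← add_assoc]
        exact hstep _ ih
    apply hTu
    apply Finset.eq_univ_of_forall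
    intro y
    have h2 := hall (y - x0).val
    have h3 : (((y - x0).val : ℕ) : ZMod n) = y - x0 := ZMod.natCast_rightInverse _
    rw [h3] at h2
    have h4 : x0 + (y - x0) = y := by ring
    rwa [h4] at h2
  · obtain ⟨y, hy, hyT⟩ := Finset.not_subset.mp h
    calc T.card + 1 = (insert y T).card := (Finset.card_insert_of_notMem hyT).symm
      _ ≤ _ := Finset.card_le_card (by
          intro z hz
          rcases Finset.mem_insert.mp hz with rfl | hz
          · exact Finset.mem_union_right _ hy
          · exact Finset.mem_union_left _ hz)


/-- Let `F` be a graph with `d₂(F) > 1` and let `ℓ ≥ 3`.  If `F_1, …, F_ℓ` is a cyclic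
sequence of copies of `F` such that no edge belongs to three of the copies and
consecutive copies share exactly one edge while non-consecutive copies share none, then
the union `𝔠` of the copies satisfies `d₂(𝔠) > d₂(F)`. -/
theorem d2_cycle_of_copies (F : Subgraph (⊤ : SimpleGraph ℕ))
    (hFfin : F.verts.Finite) (hFe : F.edgeSet.Nonempty) (hd : 1 < d2 F)
    (ℓ : ℕ) (hℓ : 3 ≤ ℓ)
    (C : ZMod ℓ → Subgraph (⊤ : SimpleGraph ℕ))
    (hcopies : ∀ i, Nonempty ((C i).coe ≃g F.coe))
    (hno3 : ∀ i j k : ZMod ℓ, i ≠ j → i ≠ k → j ≠ k →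
      ∀ e, e ∈ (C i).edgeSet → e ∈ (C j).edgeSet → e ∉ (C k).edgeSet)
    (hint : ∀ i j : ZMod ℓ, i ≠ j →
      ((C i).edgeSet ∩ (C j).edgeSet).ncard =
        if j = i + 1 ∨ j = i - 1 then 1 else 0) :
    d2 F < d2 (⨆ i, C i) := by
  classical
  haveI : NeZero ℓ := ⟨by omega⟩
  haveI : Fact (1 < ℓ) := ⟨by omega⟩
  set v := F.verts.ncard with hv
  set e := F.edgeSet.ncard with he
  -- basic facts about F
  have hv3 : 3 ≤ v := by
    by_contra h
    rw [d2, d2v, ← hv, ← he, if_neg h] at hd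
    exact lt_irrefl 1 hd
  have hdF : d2 F = ((e : ℝ) - 1) / ((v : ℝ) - 2) := by
    rw [d2, d2v, ← hv, ← he, if_pos hv3]
  have hvpos : (0 : ℝ) < (v : ℝ) - 2 := by
    have : (3 : ℝ) ≤ (v : ℝ) := by exact_mod_cast hv3
    linarith
  have hve : v ≤ e := by
    rw [hdF] at hd
    rw [lt_div_iff₀ hvpos] at hd
    have : (v : ℝ) < (e : ℝ) + 1 := by linarith
    exact_mod_cast Nat.lt_add_one_iff.mp (by exact_mod_cast this)
  -- per-copy cardinalities
  have hiso := fun i => (hcopies i).some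
  haveI hFvfinI : Finite ↥F.verts := hFfin
  have hCvfin : ∀ i, (C i).verts.Finite := fun i => by
    haveI : Finite ↥(C i).verts := Finite.of_equiv _ (hiso i).toEquiv.symm
    exact Set.toFinite _
  have hCvcard : ∀ i, (C i).verts.ncard = v := fun i => by
    rw [hv, ← Nat.card_coe_set_eq, ← Nat.card_coe_set_eq]
    exact Nat.card_congr (hiso i).toEquiv
  have hedgecard : ∀ (H : Subgraph (⊤ : SimpleGraph ℕ)),
      H.edgeSet.ncard = Nat.card H.coe.edgeSet := by
    intro H
    rw [← H.image_coe_edgeSet_coe,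
      Set.ncard_image_of_injective _ (Sym2.map.injective Subtype.val_injective),
      Nat.card_coe_set_eq]
  have hedgefin : ∀ (H : Subgraph (⊤ : SimpleGraph ℕ)), H.verts.Finite → H.edgeSet.Finite := by
    intro H hH
    haveI : Finite ↥H.verts := hH
    rw [← H.image_coe_edgeSet_coe]
    exact Set.Finite.image _ (Set.toFinite _)
  have hFefin : F.edgeSet.Finite := hedgefin F hFfin
  have hCefin : ∀ i, (C i).edgeSet.Finite := fun i => hedgefin _ (hCvfin i)
  have hCecard : ∀ i, (C i).edgeSet.ncard = e := fun i => by
    rw [hedgecard, he, hedgecard]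
    exact Nat.card_congr (hiso i).mapEdgeSet
  -- shared edges
  have hne1 : ∀ i : ZMod ℓ, i ≠ i + 1 := by
    intro i h
    exact one_ne_zero (left_eq_add.mp h)
  have h2ne : (2 : ZMod ℓ) ≠ 0 := by
    intro h
    have h2 : ((2 : ℕ) : ZMod ℓ) = 0 := by exact_mod_cast h
    have := Nat.le_of_dvd two_pos ((ZMod.natCast_eq_zero_iff 2 ℓ).mp h2)
    omega
  have hadd_ne : ∀ i k : ZMod ℓ, k ≠ 0 → i ≠ i + k := by
    intro i k hk h
    exact hk (left_eq_add.mp h)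
  have hg' : ∀ i : ZMod ℓ, ∃ x, (C i).edgeSet ∩ (C (i + 1)).edgeSet = {x} := by
    intro i
    have h := hint i (i + 1) (hne1 i)
    rw [if_pos (Or.inl rfl)] at h
    exact Set.ncard_eq_one.mp h
  choose g hgspec using hg'
  have hgi : ∀ i, g i ∈ (C i).edgeSet ∧ g i ∈ (C (i + 1)).edgeSet := by
    intro i
    have h : g i ∈ (C i).edgeSet ∩ (C (i + 1)).edgeSet := by
      rw [hgspec i]; exact rfl
    exact h
  have key3 : ∀ (x : Sym2 ℕ) (i j : ZMod ℓ), i ≠ j →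
      x ∈ (C i).edgeSet → x ∈ (C (i + 1)).edgeSet →
      x ∈ (C j).edgeSet → x ∈ (C (j + 1)).edgeSet → False := by
    intro x i j hij hxi hxi1 hxj hxj1
    by_cases h1 : j = i + 1
    · subst h1
      have e2 : i + 1 + 1 = i + 2 := by ring
      rw [e2] at hxj1
      exact hno3 i (i + 1) (i + 2) (hne1 i) (hadd_ne i 2 h2ne)
        (by intro h; exact (hadd_ne (i+1) 1 one_ne_zero) (by rw [← e2] at h; exact h))
        x hxi hxi1 hxj1
    · by_cases h2 : i = j + 1
      · subst h2
        have e2 : j + 1 + 1 = j + 2 := by ring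
        rw [e2] at hxi1
        exact hno3 j (j + 1) (j + 2) (hne1 j) (hadd_ne j 2 h2ne)
          (by intro h; exact (hadd_ne (j+1) 1 one_ne_zero) (by rw [← e2] at h; exact h))
          x hxj hxi hxi1
      · exact hno3 i (i + 1) j (hne1 i) hij (fun h => h1 h.symm) x hxi hxi1 hxj
  have hginj : Function.Injective g := by
    intro i j hgij
    by_contra hij
    exact key3 (g i) i j hij (hgi i).1 (hgi i).2
      (by rw [hgij]; exact (hgi j).1) (by rw [hgij]; exact (hgi j).2)
  -- Finsets of edges
  set EF : ZMod ℓ → Finset (Sym2 ℕ) := fun i => (hCefin i).toFinset with hEF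
  have hmemEF : ∀ x i, x ∈ EF i ↔ x ∈ (C i).edgeSet := by
    intro x i; rw [hEF]; exact Set.Finite.mem_toFinset _
  have hEFcard : ∀ i, (EF i).card = e := by
    intro i
    rw [hEF, ← Set.ncard_eq_toFinset_card _ (hCefin i), hCecard i]
  set UE := Finset.univ.biUnion EF with hUE
  have hUEeq : (⨆ i, C i).edgeSet = ↑UE := by
    rw [Subgraph.edgeSet_iSup]
    ext x
    simp only [Set.mem_iUnion, hUE, Finset.coe_biUnion, Finset.coe_univ, Set.mem_univ,
      Set.iUnion_true, Finset.mem_coe, hmemEF]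
  have hmult2 : ∀ x, (Finset.univ.filter (fun i => x ∈ EF i)).card ≤ 2 := by
    intro x
    by_contra h
    push_neg at h
    obtain ⟨a, ha, b, hb, c, hc, hab, hac, hbc⟩ := Finset.two_lt_card.mp h
    rw [Finset.mem_filter, hmemEF] at ha hb hc
    exact hno3 a b c hab hac hbc x ha.2 hb.2 hc.2
  have hgmemUE : ∀ i, g i ∈ UE := by
    intro i
    exact Finset.mem_biUnion.mpr ⟨i, Finset.mem_univ i, (hmemEF _ i).mpr (hgi i).1⟩
  have hmult_eq : ∀ x ∈ UE, (Finset.univ.filter (fun i => x ∈ EF i)).card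
      = 1 + (if x ∈ Finset.univ.image g then 1 else 0) := by
    intro x hx
    obtain ⟨i, -, hxi⟩ := Finset.mem_biUnion.mp hx
    have hile : i ∈ Finset.univ.filter (fun i => x ∈ EF i) :=
      Finset.mem_filter.mpr ⟨Finset.mem_univ i, hxi⟩
    by_cases hxg : x ∈ Finset.univ.image g
    · rw [if_pos hxg]
      obtain ⟨j, -, rfl⟩ := Finset.mem_image.mp hxg
      have h2le : 1 < (Finset.univ.filter (fun i => g j ∈ EF i)).card := by
        apply Finset.one_lt_card.mpr
        exact ⟨j, Finset.mem_filter.mpr ⟨Finset.mem_univ j, (hmemEF _ j).mpr (hgi j).1⟩,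
          j + 1, Finset.mem_filter.mpr ⟨Finset.mem_univ (j+1), (hmemEF _ (j+1)).mpr (hgi j).2⟩,
          hne1 j⟩
      have := hmult2 (g j)
      omega
    · rw [if_neg hxg]
      have h1 : 0 < (Finset.univ.filter (fun i => x ∈ EF i)).card :=
        Finset.card_pos.mpr ⟨i, hile⟩
      have h2 : (Finset.univ.filter (fun i => x ∈ EF i)).card ≤ 1 := by
        by_contra h
        push_neg at h
        obtain ⟨a, ha, b, hb, hab⟩ := Finset.one_lt_card.mp h
        rw [Finset.mem_filter, hmemEF] at ha hb
        have hne : a ≠ b := hab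
        have hxint : x ∈ (C a).edgeSet ∩ (C b).edgeSet := ⟨ha.2, hb.2⟩
        have hfin : ((C a).edgeSet ∩ (C b).edgeSet).Finite :=
          (hCefin a).subset Set.inter_subset_left
        have hpos : 0 < ((C a).edgeSet ∩ (C b).edgeSet).ncard :=
          (Set.ncard_pos hfin).mpr ⟨x, hxint⟩
        have hi := hint a b hne
        by_cases hc : b = a + 1 ∨ b = a - 1
        · rcases hc with rfl | hc
          · rw [hgspec a] at hxint
            exact hxg (Finset.mem_image.mpr ⟨a, Finset.mem_univ a, hxint.symm⟩)
          · have hb1 : b + 1 = a := by rw [hc]; ring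
            have hxint2 : x ∈ (C b).edgeSet ∩ (C (b + 1)).edgeSet := by
              rw [hb1]; exact ⟨hb.2, ha.2⟩
            rw [hgspec b] at hxint2
            exact hxg (Finset.mem_image.mpr ⟨b, Finset.mem_univ b, hxint2.symm⟩)
        · rw [if_neg hc] at hi
          omega
      omega
  have hUEcard : ℓ * e = UE.card + ℓ := by
    have h1 := dc_aux EF
    rw [Finset.sum_congr rfl (fun i _ => hEFcard i), Finset.sum_const, smul_eq_mul,
      Finset.card_univ, ZMod.card ℓ] at h1
    rw [Finset.sum_congr rfl hmult_eq, Finset.sum_add_distrib, Finset.sum_const,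
      smul_eq_mul, mul_one, ← Finset.card_filter, Finset.filter_mem_eq_inter,
      Finset.inter_eq_right.mpr (fun x hx => by
        obtain ⟨j, -, rfl⟩ := Finset.mem_image.mp hx; exact hgmemUE j),
      Finset.card_image_of_injective _ hginj, Finset.card_univ, ZMod.card ℓ] at h1
    exact h1
  -- Finsets of vertices
  set VF : ZMod ℓ → Finset ℕ := fun i => (hCvfin i).toFinset with hVF
  have hmemVF : ∀ (x : ℕ) (i), x ∈ VF i ↔ x ∈ (C i).verts := by
    intro x i; rw [hVF]; exact Set.Finite.mem_toFinset _
  have hVFcard : ∀ i, (VF i).card = v := by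
    intro i
    rw [hVF, ← Set.ncard_eq_toFinset_card _ (hCvfin i), hCvcard i]
  set UV := Finset.univ.biUnion VF with hUVdef
  have hUVeq : (⨆ i, C i).verts = ↑UV := by
    rw [Subgraph.verts_iSup]
    ext x
    simp only [Set.mem_iUnion, hUVdef, Finset.coe_biUnion, Finset.coe_univ, Set.mem_univ,
      Set.iUnion_true, Finset.mem_coe, hmemVF]
  -- endpoints of the shared edges
  have hrep : ∀ z : Sym2 ℕ, ∃ x y, z = s(x, y) := Sym2.ind (fun x y => ⟨x, y, rfl⟩)
  have hab : ∀ i : ZMod ℓ, ∃ x y, g i = s(x, y) ∧ x ≠ y := by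
    intro i
    obtain ⟨x, y, hxy⟩ := hrep (g i)
    refine ⟨x, y, hxy, ?_⟩
    have := (hgi i).1
    rw [hxy, Subgraph.mem_edgeSet] at this
    exact this.ne
  choose a b habeq habne using hab
  set S : Finset ℕ := Finset.univ.biUnion (fun i => ({a i, b i} : Finset ℕ)) with hS
  have hSfilter : ∀ i, S.filter (fun x => x ∈ g i) = {a i, b i} := by
    intro i
    ext x
    simp only [Finset.mem_filter, Finset.mem_insert, Finset.mem_singleton]
    constructor
    · rintro ⟨-, hx⟩
      rw [habeq i, Sym2.mem_iff] at hx
      exact hx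
    · rintro (rfl | rfl)
      · exact ⟨Finset.mem_biUnion.mpr ⟨i, Finset.mem_univ i,
          Finset.mem_insert_self _ _⟩, by rw [habeq i]; exact Sym2.mem_mk_left _ _⟩
      · exact ⟨Finset.mem_biUnion.mpr ⟨i, Finset.mem_univ i,
          Finset.mem_insert.mpr (Or.inr (Finset.mem_singleton_self _))⟩,
          by rw [habeq i]; exact Sym2.mem_mk_right _ _⟩
  have hTsum : ∑ x ∈ S, (Finset.univ.filter (fun i => x ∈ g i)).card = 2 * ℓ := by
    simp_rw [Finset.card_filter]
    rw [Finset.sum_comm]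
    have hterm : ∀ i : ZMod ℓ, (∑ x ∈ S, if x ∈ g i then 1 else 0) = 2 := by
      intro i
      rw [← Finset.card_filter, hSfilter i, Finset.card_pair (habne i)]
    rw [Finset.sum_congr rfl (fun i _ => hterm i), Finset.sum_const, smul_eq_mul,
      Finset.card_univ, ZMod.card ℓ, mul_comm]
  -- T x ∪ (T x + 1) ⊆ D x
  have hTD : ∀ x : ℕ, (Finset.univ.filter (fun i => x ∈ g i))
      ∪ (Finset.univ.filter (fun i => x ∈ g i)).image (· + 1)
      ⊆ Finset.univ.filter (fun i => x ∈ VF i) := by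
    intro x j hj
    rcases Finset.mem_union.mp hj with hj | hj
    · rw [Finset.mem_filter] at hj
      exact Finset.mem_filter.mpr ⟨Finset.mem_univ _,
        (hmemVF x j).mpr (Subgraph.mem_verts_of_mem_edge (hgi j).1 hj.2)⟩
    · obtain ⟨i, hi, rfl⟩ := Finset.mem_image.mp hj
      rw [Finset.mem_filter] at hi
      exact Finset.mem_filter.mpr ⟨Finset.mem_univ _,
        (hmemVF x _).mpr (Subgraph.mem_verts_of_mem_edge (hgi i).2 hi.2)⟩
  have hTne : ∀ x ∈ S, (Finset.univ.filter (fun i => x ∈ g i)).Nonempty := by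
    intro x hx
    obtain ⟨i, -, hi⟩ := Finset.mem_biUnion.mp hx
    refine ⟨i, Finset.mem_filter.mpr ⟨Finset.mem_univ i, ?_⟩⟩
    rw [habeq i]
    rcases Finset.mem_insert.mp hi with rfl | hi
    · exact Sym2.mem_mk_left _ _
    · rw [Finset.mem_singleton] at hi
      subst hi
      exact Sym2.mem_mk_right _ _
  have hdeg_lb : ∀ x ∈ S, (Finset.univ.filter (fun i => x ∈ g i)) ≠ Finset.univ →
      (Finset.univ.filter (fun i => x ∈ g i)).card + 1
        ≤ (Finset.univ.filter (fun i => x ∈ VF i)).card := by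
    intro x hx hne
    calc (Finset.univ.filter (fun i => x ∈ g i)).card + 1
        ≤ ((Finset.univ.filter (fun i => x ∈ g i))
            ∪ (Finset.univ.filter (fun i => x ∈ g i)).image (· + 1)).card :=
          arc_card (hTne x hx) hne
      _ ≤ _ := Finset.card_le_card (hTD x)
  have huniq : ∀ x y : ℕ, (Finset.univ.filter (fun i => x ∈ g i)) = Finset.univ →
      (Finset.univ.filter (fun i => y ∈ g i)) = Finset.univ → x = y := by
    intro x y hx hy
    by_contra hxy
    have hmem : ∀ (z : ℕ) (i : ZMod ℓ), (Finset.univ.filter (fun i => z ∈ g i)) = Finset.univ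
        → z ∈ g i := by
      intro z i hz
      have h5 : i ∈ Finset.univ.filter (fun j => z ∈ g j) := by
        rw [hz]; exact Finset.mem_univ i
      exact (Finset.mem_filter.mp h5).2
    have hg01 : g 0 = g 1 :=
      Sym2.eq_of_ne_mem hxy (hmem x 0 hx) (hmem y 0 hy) (hmem x 1 hx) (hmem y 1 hy)
    have h01 : (0 : ZMod ℓ) = 1 := hginj hg01
    exact one_ne_zero h01.symm
  -- bound on the sum over S
  have hScount : 2 * ℓ - 1 ≤ ∑ x ∈ S, ((Finset.univ.filter (fun i => x ∈ VF i)).card - 1) := by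
    by_cases hex : ∃ x ∈ S, (Finset.univ.filter (fun i => x ∈ g i)) = Finset.univ
    · obtain ⟨x0, hx0S, hx0⟩ := hex
      have hterm0 : ℓ ≤ (Finset.univ.filter (fun i => x0 ∈ VF i)).card := by
        have h1 : (Finset.univ.filter (fun i => x0 ∈ g i)).card = ℓ := by
          rw [hx0, Finset.card_univ, ZMod.card ℓ]
        have h2 : (Finset.univ.filter (fun i => x0 ∈ g i)).card
            ≤ (Finset.univ.filter (fun i => x0 ∈ VF i)).card :=
          Finset.card_le_card (fun j hj => hTD x0 (Finset.mem_union_left _ hj))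
        omega
      have hsplit2 : ((Finset.univ.filter (fun i => x0 ∈ VF i)).card - 1)
          + ∑ x ∈ S.erase x0, ((Finset.univ.filter (fun i => x ∈ VF i)).card - 1)
          = ∑ x ∈ S, ((Finset.univ.filter (fun i => x ∈ VF i)).card - 1) :=
        Finset.add_sum_erase S (fun x => (Finset.univ.filter (fun i => x ∈ VF i)).card - 1) hx0S
      have hrest : ∑ x ∈ S.erase x0, (Finset.univ.filter (fun i => x ∈ g i)).card
          ≤ ∑ x ∈ S.erase x0, ((Finset.univ.filter (fun i => x ∈ VF i)).card - 1) := by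
        apply Finset.sum_le_sum
        intro x hx
        have hxS := Finset.mem_of_mem_erase hx
        have hne : (Finset.univ.filter (fun i => x ∈ g i)) ≠ Finset.univ := by
          intro h
          exact (Finset.ne_of_mem_erase hx) (huniq x x0 h hx0)
        have := hdeg_lb x hxS hne
        omega
      have hTx0 : (Finset.univ.filter (fun i => x0 ∈ g i)).card = ℓ := by
        rw [hx0, Finset.card_univ, ZMod.card ℓ]
      have hsplit : (Finset.univ.filter (fun i => x0 ∈ g i)).card
          + ∑ x ∈ S.erase x0, (Finset.univ.filter (fun i => x ∈ g i)).card = 2 * ℓ :=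
        (Finset.add_sum_erase S
          (fun x => (Finset.univ.filter (fun i => x ∈ g i)).card) hx0S).trans hTsum
      clear hsplit2
      have hsplit2 : ((Finset.univ.filter (fun i => x0 ∈ VF i)).card - 1)
          + ∑ x ∈ S.erase x0, ((Finset.univ.filter (fun i => x ∈ VF i)).card - 1)
          = ∑ x ∈ S, ((Finset.univ.filter (fun i => x ∈ VF i)).card - 1) :=
        Finset.add_sum_erase S (fun x => (Finset.univ.filter (fun i => x ∈ VF i)).card - 1) hx0S
      omega
    · push_neg at hex
      calc 2 * ℓ - 1 ≤ 2 * ℓ := by omega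
        _ = ∑ x ∈ S, (Finset.univ.filter (fun i => x ∈ g i)).card := hTsum.symm
        _ ≤ _ := by
            apply Finset.sum_le_sum
            intro x hx
            have := hdeg_lb x hx (hex x hx)
            omega
  -- total vertex count
  have hUVsum : ∑ x ∈ UV, (Finset.univ.filter (fun i => x ∈ VF i)).card = ℓ * v := by
    have h1 := dc_aux VF
    rw [Finset.sum_congr rfl (fun i _ => hVFcard i), Finset.sum_const, smul_eq_mul,
      Finset.card_univ, ZMod.card ℓ] at h1
    exact h1.symm
  have hSsubUV : S ⊆ UV := by
    intro x hx
    obtain ⟨i, -, hi⟩ := Finset.mem_biUnion.mp hx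
    apply Finset.mem_biUnion.mpr ⟨i, Finset.mem_univ i, ?_⟩
    rw [hmemVF]
    apply Subgraph.mem_verts_of_mem_edge (hgi i).1
    rw [habeq i]
    rcases Finset.mem_insert.mp hi with rfl | hi
    · exact Sym2.mem_mk_left _ _
    · rw [Finset.mem_singleton] at hi
      subst hi
      exact Sym2.mem_mk_right _ _
  have hUVbound : UV.card + 2 * ℓ ≤ ℓ * v + 1 := by
    have h2 : ∑ x ∈ S, ((Finset.univ.filter (fun i => x ∈ VF i)).card - 1)
        ≤ ∑ x ∈ UV, ((Finset.univ.filter (fun i => x ∈ VF i)).card - 1) :=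
      Finset.sum_le_sum_of_subset hSsubUV
    have h3 : ∑ x ∈ UV, (Finset.univ.filter (fun i => x ∈ VF i)).card
        = UV.card + ∑ x ∈ UV, ((Finset.univ.filter (fun i => x ∈ VF i)).card - 1) := by
      rw [Finset.card_eq_sum_ones, ← Finset.sum_add_distrib]
      apply Finset.sum_congr rfl
      intro x hx
      have h4 : 1 ≤ (Finset.univ.filter (fun i => x ∈ VF i)).card := by
        obtain ⟨i, -, hi⟩ := Finset.mem_biUnion.mp hx
        exact Finset.card_pos.mpr ⟨i, Finset.mem_filter.mpr ⟨Finset.mem_univ i, hi⟩⟩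
      omega
    omega
  -- final arithmetic
  have hUV3 : 3 ≤ UV.card := by
    have hsub : VF 0 ⊆ UV := Finset.subset_biUnion_of_mem VF (Finset.mem_univ 0)
    have := Finset.card_le_card hsub
    rw [hVFcard 0] at this
    omega
  rw [hdF, d2, hUVeq, hUEeq, Set.ncard_coe_finset, Set.ncard_coe_finset, d2v, if_pos hUV3]
  have hVupos : (0 : ℝ) < (UV.card : ℝ) - 2 := by
    have : (3 : ℝ) ≤ (UV.card : ℝ) := by exact_mod_cast hUV3
    linarith
  rw [div_lt_div_iff₀ hvpos hVupos]
  have hBr : (UE.card : ℝ) = (ℓ : ℝ) * e - ℓ := by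
    have h0 : ((ℓ : ℝ) * e) = (UE.card : ℝ) + ℓ := by exact_mod_cast hUEcard
    linarith
  have hAr : (UV.card : ℝ) + 2 * ℓ ≤ (ℓ : ℝ) * v + 1 := by exact_mod_cast hUVbound
  have hvr : (3 : ℝ) ≤ (v : ℝ) := by exact_mod_cast hv3
  have hlr : (3 : ℝ) ≤ (ℓ : ℝ) := by exact_mod_cast hℓ
  have her : (v : ℝ) ≤ (e : ℝ) := by exact_mod_cast hve
  rw [hBr]
  have h5 : ((e : ℝ) - 1) * ((UV.card : ℝ) - 2)
      ≤ ((e : ℝ) - 1) * ((ℓ : ℝ) * v - 2 * ℓ - 1) := by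
    apply mul_le_mul_of_nonneg_left _ (by linarith)
    linarith
  nlinarith [h5]
end
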